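/- arXiv:2202.09902 — 9 statements merged into one kernel-verified Lean document; each statement's English description precedes it below -/
import Mathlib

section
/- If λ(γ,β) < α < γ < β < κ, then tr(α,β) = tr(γ,β) ⌢ tr(α,γ), i.e., the walk from β to α passes through γ and decomposes as the concatenation of the walk from β to γ with the walk from γ to α. -/
open Cardinal Set

/-- The walk `Tr(α,β) : ω → κ` along the `C`-sequence `C`:
`Tr(α,β)(0) = β`; `Tr(α,β)(n+1) = min(C_{Tr(α,β)(n)} \ α)` as long as the previous
step is above `α`, and `α` from then on. -/
noncomputable def TrW (C : Ordinal → Set Ordinal) (α β : Ordinal) : ℕ → Ordinal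
  | 0 => β
  | n + 1 => if α < TrW C α β n then sInf (C (TrW C α β n) ∩ Set.Ici α) else α

/-- `ρ₂(α,β)`: the length of the walk from `β` down to `α`. -/
noncomputable def rho2 (C : Ordinal → Set Ordinal) (α β : Ordinal) : ℕ :=
  sInf {n : ℕ | TrW C α β n = α}

/-- The image of `tr(α,β) = Tr(α,β) ↾ ρ₂(α,β)`. -/
noncomputable def trIm (C : Ordinal → Set Ordinal) (α β : Ordinal) : Set Ordinal :=
  (fun n => TrW C α β n) '' {n : ℕ | n < rho2 C α β}

/-- `λ(α,β) := max{sup(C_{Tr(α,β)(i)} ∩ α) : i < ρ₂(α,β)}`. -/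
noncomputable def lamW (C : Ordinal → Set Ordinal) (α β : Ordinal) : Ordinal :=
  sSup {x | ∃ n < rho2 C α β, x = sSup (C (TrW C α β n) ∩ Set.Iio α)}

/-- `λ₂(α,β) := sup(α ∩ {sup(C_δ ∩ α) : δ ∈ im(tr(α,β))})`. -/
noncomputable def lam2 (C : Ordinal → Set Ordinal) (α β : Ordinal) : Ordinal :=
  sSup (Set.Iio α ∩ {x | ∃ δ ∈ trIm C α β, x = sSup (C δ ∩ Set.Iio α)})

/-- `acc(s) := {δ ∈ s : sup(s ∩ δ) = δ > 0}`. -/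
def accSet (s : Set Ordinal) : Set Ordinal := {δ ∈ s | 0 < δ ∧ sSup (s ∩ Set.Iio δ) = δ}

/-- `C` is a `C`-sequence over `κ`: each `C α` is a closed subset of `α`
with `sup (C α) = sup α`. -/
def IsCSeq (κo : Ordinal) (C : Ordinal → Set Ordinal) : Prop :=
  ∀ α < κo, (∀ x ∈ C α, x < α) ∧ sSup (C α) = sSup (Set.Iio α) ∧
    ∀ δ < α, 0 < δ → sSup (C α ∩ Set.Iio δ) = δ → δ ∈ C α

/-!
Along the walk from `β` to `γ`, every `C δ` has `sup (C δ ∩ γ) ≤ λ(γ,β) < α`, so `C δ` misses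
`[α, γ)` and the least point of `C δ` above `α` is the least one above `γ`. Hence the walk from
`β` to `α` follows the walk from `β` to `γ` step by step until it reaches `γ`, and from there it
is the walk from `γ` to `α`.
-/

theorem Set.inter_Ici_eq_inter_Ici_of_sSup_lt {L : Type*} [ConditionallyCompleteLinearOrder L]
    (s : Set L) {α γ : L} (hαγ : α ≤ γ) (h : sSup (s ∩ Iio γ) < α) :
    s ∩ Ici α = s ∩ Ici γ := by
  refine Subset.antisymm (fun x ⟨hxs, hαx⟩ => ⟨hxs, ?_⟩)
    (inter_subset_inter_right s (Ici_subset_Ici.2 hαγ))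
  by_contra! hxγ
  have hx : x ≤ sSup (s ∩ Iio γ) := le_csSup ⟨γ, fun y hy => hy.2.le⟩ ⟨hxs, lt_of_not_ge hxγ⟩
  exact (hx.trans_lt h).not_ge hαx

variable {C : Ordinal → Set Ordinal} {α β γ : Ordinal}

theorem TrW_succ_of_lt {n : ℕ} (h : α < TrW C α β n) :
    TrW C α β (n + 1) = sInf (C (TrW C α β n) ∩ Ici α) :=
  if_pos h

theorem TrW_add_of_eq {m : ℕ} (h : TrW C α β m = γ) (n : ℕ) :
    TrW C α β (m + n) = TrW C α γ n := by
  induction n with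
  | zero => exact h
  | succ n ih => rw [← Nat.add_assoc, TrW, ih, TrW]

theorem TrW_rho2 (h : ∃ n, TrW C α β n = α) : TrW C α β (rho2 C α β) = α :=
  Nat.sInf_mem h

theorem TrW_ne_of_lt_rho2 {n : ℕ} (h : n < rho2 C α β) : TrW C α β n ≠ α :=
  Nat.notMem_of_lt_sInf h

theorem rho2_eq_add_of_TrW_eq {m : ℕ} (hm : TrW C α β m = γ) (hne : ∀ i < m, TrW C α β i ≠ α)
    (hγ : ∃ n, TrW C α γ n = α) : rho2 C α β = m + rho2 C α γ := by
  have hshift := TrW_add_of_eq hm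
  refine le_antisymm (Nat.sInf_le (by rw [mem_ofPred_eq, hshift, TrW_rho2 hγ])) ?_
  refine le_csInf ⟨_, (hshift _).trans (TrW_rho2 hγ)⟩ fun i hi => ?_
  obtain ⟨j, rfl⟩ := Nat.exists_eq_add_of_le (not_lt.1 fun him => hne i him hi)
  exact Nat.add_le_add_left (Nat.sInf_le ((hshift j).symm.trans hi)) m

theorem sSup_inter_Iio_le_lamW {n : ℕ} (hn : n < rho2 C α β) :
    sSup (C (TrW C α β n) ∩ Iio α) ≤ lamW C α β := by
  refine le_csSup ?_ ⟨n, hn, rfl⟩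
  refine ((finite_Iio (rho2 C α β)).image fun i => sSup (C (TrW C α β i) ∩ Iio α)).bddAbove.mono ?_
  rintro _ ⟨i, hi, rfl⟩
  exact ⟨i, hi, rfl⟩

namespace IsCSeq

variable {κo : Ordinal} (hC : IsCSeq κo C)
include hC

theorem inter_Ici_nonempty {δ : Ordinal} (h0 : 0 < γ) (hγδ : γ < δ) (hδ : δ < κo) :
    (C δ ∩ Ici γ).Nonempty := by
  by_contra! hempty
  have hsub : C δ ⊆ Iio γ := fun x hx =>
    mem_Iio.2 <| lt_of_not_ge fun hγx => hempty.subset ⟨hx, hγx⟩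
  have hsup : sSup (C δ) = γ := by
    refine le_antisymm (csSup_le' fun x hx => (hsub hx).le) ?_
    rw [(hC δ hδ).2.1]
    exact le_csSup bddAbove_Iio hγδ
  have hγ : γ ∈ C δ := (hC δ hδ).2.2 γ hγδ h0 (by rw [inter_eq_left.2 hsub, hsup])
  exact (mem_Iio.1 (hsub hγ)).false

/-- The junk value `sInf ∅ = 0` is harmless here: `C δ ∩ Ici α` is empty only when `α = 0`. -/
theorem sInf_inter_Ici_mem_Ico {δ : Ordinal} (hαδ : α < δ) (hδ : δ < κo) :
    sInf (C δ ∩ Ici α) ∈ Ico α δ := by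
  rcases (C δ ∩ Ici α).eq_empty_or_nonempty with hempty | hne
  · obtain rfl : α = 0 := by
      by_contra hα
      exact (hC.inter_Ici_nonempty (pos_iff_ne_zero.2 hα) hαδ hδ).ne_empty hempty
    rw [hempty, Ordinal.sInf_empty]
    exact ⟨le_rfl, hαδ⟩
  · have hmem := csInf_mem hne
    exact ⟨hmem.2, (hC δ hδ).1 _ hmem.1⟩

theorem TrW_mem_Icc (hαβ : α ≤ β) (hβ : β < κo) (n : ℕ) : TrW C α β n ∈ Icc α β := by
  induction n with
  | zero => exact ⟨hαβ, le_rfl⟩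
  | succ n ih =>
    by_cases hlt : α < TrW C α β n
    · rw [TrW_succ_of_lt hlt]
      have hmem := hC.sInf_inter_Ici_mem_Ico hlt (ih.2.trans_lt hβ)
      exact ⟨hmem.1, hmem.2.le.trans ih.2⟩
    · rw [TrW, if_neg hlt]
      exact ⟨le_rfl, hαβ⟩

theorem exists_TrW_eq (hαβ : α ≤ β) (hβ : β < κo) : ∃ n, TrW C α β n = α := by
  induction β using WellFoundedLT.induction with
  | _ β ih =>
    rcases hαβ.eq_or_lt with rfl | hlt
    · exact ⟨0, rfl⟩
    have hstep : TrW C α β 1 = sInf (C β ∩ Ici α) := TrW_succ_of_lt hlt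
    have hmem := hC.sInf_inter_Ici_mem_Ico hlt hβ
    obtain ⟨n, hn⟩ := ih _ hmem.2 hmem.1 (hmem.2.trans hβ)
    exact ⟨1 + n, (TrW_add_of_eq hstep n).trans hn⟩

theorem TrW_eq_of_lamW_lt (h1 : lamW C γ β < α) (h2 : α < γ) (h3 : γ ≤ β) (h4 : β < κo) :
    ∀ n ≤ rho2 C γ β, TrW C α β n = TrW C γ β n := by
  intro n hn
  induction n with
  | zero => rfl
  | succ n ih =>
    have hnm : n < rho2 C γ β := hn
    have hγδ : γ < TrW C γ β n :=
      (hC.TrW_mem_Icc h3 h4 n).1.lt_of_ne' (TrW_ne_of_lt_rho2 hnm)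
    have hαδ : α < TrW C α β n := ih hnm.le ▸ h2.trans hγδ
    rw [TrW_succ_of_lt hγδ, TrW_succ_of_lt hαδ, ih hnm.le,
      (C _).inter_Ici_eq_inter_Ici_of_sSup_lt h2.le ((sSup_inter_Iio_le_lamW hnm).trans_lt h1)]

end IsCSeq

theorem fact2_general (κ : Cardinal)
    (C : Ordinal → Set Ordinal) (hC : IsCSeq κ.ord C) (α β γ : Ordinal)
    (h1 : lamW C γ β < α) (h2 : α < γ) (h3 : γ < β) (h4 : β < κ.ord) :
    rho2 C α β = rho2 C γ β + rho2 C α γ ∧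
      (∀ n < rho2 C γ β, TrW C α β n = TrW C γ β n) ∧
      (∀ n < rho2 C α γ, TrW C α β (rho2 C γ β + n) = TrW C α γ n) := by
  have hagree := hC.TrW_eq_of_lamW_lt h1 h2 h3.le h4
  have hγ : TrW C α β (rho2 C γ β) = γ := by
    rw [hagree _ le_rfl, TrW_rho2 (hC.exists_TrW_eq h3.le h4)]
  have habove : ∀ i < rho2 C γ β, TrW C α β i ≠ α := fun i hi => by
    rw [hagree i hi.le]
    exact (h2.trans_le (hC.TrW_mem_Icc h3.le h4 i).1).ne'
  exact ⟨rho2_eq_add_of_TrW_eq hγ habove (hC.exists_TrW_eq h2.le (h3.trans h4)),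
    fun n hn => hagree n hn.le, fun n _ => TrW_add_of_eq hγ n⟩

/-- Fact 2: if `λ(γ,β) < α < γ < β < κ` then `tr(α,β) = tr(γ,β) ⌢ tr(α,γ)`. -/
theorem fact2 (κ : Cardinal) (hreg : κ.IsRegular) (huncb : Cardinal.aleph 0 < κ)
    (C : Ordinal → Set Ordinal) (hC : IsCSeq κ.ord C) (α β γ : Ordinal)
    (h1 : lamW C γ β < α) (h2 : α < γ) (h3 : γ < β) (h4 : β < κ.ord) :
    rho2 C α β = rho2 C γ β + rho2 C α γ ∧
      (∀ n < rho2 C γ β, TrW C α β n = TrW C γ β n) ∧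
      (∀ n < rho2 C α γ, TrW C α β (rho2 C γ β + n) = TrW C α γ n) :=
  fact2_general κ C hC α β γ h1 h2 h3 h4
end

section
/- Suppose λ₂(γ,β) < α < γ < β < κ. Then tr(α,β) end-extends tr(γ,β), and moreover either γ ∈ im(tr(α,β)), or γ ∈ acc(C_δ) where δ := min(im(tr(γ,β))). -/
open Cardinal Set

lemma TrW_succ (C : Ordinal → Set Ordinal) (α β : Ordinal) (n : ℕ) :
    TrW C α β (n+1) = if α < TrW C α β n then sInf (C (TrW C α β n) ∩ Set.Ici α) else α := rfl

lemma step_nonempty {κo : Ordinal} {C : Ordinal → Set Ordinal} (hC : IsCSeq κo C)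
    {x δ : Ordinal} (hx : 0 < x) (hxδ : x < δ) (hδ : δ < κo) :
    (C δ ∩ Set.Ici x).Nonempty := by
  obtain ⟨hlt, hsup, hclosed⟩ := hC δ hδ
  by_contra h
  rw [Set.not_nonempty_iff_eq_empty, Set.eq_empty_iff_forall_notMem] at h
  have hall : ∀ y ∈ C δ, y < x := by
    intro y hy
    by_contra hyx
    exact h y ⟨hy, not_lt.1 hyx⟩
  have hge : x ≤ sSup (C δ) := by
    rw [hsup]
    exact le_csSup bddAbove_Iio hxδ
  rcases (C δ).eq_empty_or_nonempty with he | hne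
  · rw [he, csSup_empty] at hge
    exact absurd hge (not_le.2 hx)
  · have hle : sSup (C δ) ≤ x := csSup_le hne (fun y hy => (hall y hy).le)
    have hx' : sSup (C δ) = x := le_antisymm hle hge
    have hseq : C δ ∩ Set.Iio x = C δ := by
      ext y; exact ⟨fun hy => hy.1, fun hy => ⟨hy, hall y hy⟩⟩
    have : x ∈ C δ := hclosed x hxδ hx (by rw [hseq, hx'])
    exact absurd (hall x this) (lt_irrefl x)

lemma walk_bounds {κo : Ordinal} {C : Ordinal → Set Ordinal} (hC : IsCSeq κo C)
    {ν β : Ordinal} (hν : 0 < ν) (hνβ : ν < β) (hβ : β < κo) :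
    ∀ n, ν ≤ TrW C ν β n ∧ TrW C ν β n ≤ β := by
  intro n
  induction n with
  | zero => exact ⟨hνβ.le, le_refl β⟩
  | succ n ih =>
    rw [TrW_succ]
    split_ifs with h
    · have hκ := lt_of_le_of_lt ih.2 hβ
      have hmem := csInf_mem (step_nonempty hC hν h hκ)
      exact ⟨hmem.2, le_trans ((hC _ hκ).1 _ hmem.1).le ih.2⟩
    · exact ⟨le_refl ν, hνβ.le⟩

lemma walk_reaches {κo : Ordinal} {C : Ordinal → Set Ordinal} (hC : IsCSeq κo C)
    {ν β : Ordinal} (hν : 0 < ν) (hνβ : ν < β) (hβ : β < κo) :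
    ∃ n, TrW C ν β n = ν := by
  by_contra h
  push_neg at h
  have hgt : ∀ n, ν < TrW C ν β n := fun n =>
    lt_of_le_of_ne (walk_bounds hC hν hνβ hβ n).1 (Ne.symm (h n))
  have hdec : ∀ n, TrW C ν β (n+1) < TrW C ν β n := by
    intro n
    have hκ := lt_of_le_of_lt (walk_bounds hC hν hνβ hβ n).2 hβ
    have hmem := csInf_mem (step_nonempty hC hν (hgt n) hκ)
    rw [TrW_succ, if_pos (hgt n)]
    exact (hC _ hκ).1 _ hmem.1
  obtain ⟨x, ⟨n, rfl⟩, hmin⟩ :=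
    (wellFounded_lt (α := Ordinal)).has_min (Set.range (TrW C ν β)) ⟨_, 0, rfl⟩
  exact hmin _ ⟨n+1, rfl⟩ (hdec n)

lemma walk_le {κo : Ordinal} {C : Ordinal → Set Ordinal} (hC : IsCSeq κo C)
    {ν β : Ordinal} (hν : 0 < ν) (hνβ : ν < β) (hβ : β < κo) :
    ∀ m n : ℕ, m ≤ n → n ≤ rho2 C ν β → TrW C ν β n ≤ TrW C ν β m := by
  intro m n
  induction n with
  | zero => intro h _; rw [Nat.le_zero.1 h]
  | succ n ih =>
    intro hmn hnρ
    rcases Nat.eq_or_lt_of_le hmn with h | h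
    · rw [h]
    · have hm : m ≤ n := Nat.lt_succ_iff.1 h
      have hn : n < rho2 C ν β := hnρ
      have hgt : ν < TrW C ν β n :=
        lt_of_le_of_ne (walk_bounds hC hν hνβ hβ n).1 (Ne.symm (Nat.notMem_of_lt_sInf hn))
      have hκ := lt_of_le_of_lt (walk_bounds hC hν hνβ hβ n).2 hβ
      have hlt : TrW C ν β (n+1) < TrW C ν β n := by
        rw [TrW_succ, if_pos hgt]
        exact (hC _ hκ).1 _ (csInf_mem (step_nonempty hC hν hgt hκ)).1
      exact le_trans hlt.le (ih hm hn.le)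

/-- If `λ₂(γ,β) < α < γ < β < κ`, then `tr(α,β)` end-extends `tr(γ,β)`, and
either `γ ∈ im(tr(α,β))`, or `γ ∈ acc(C_δ)` for `δ := min(im(tr(γ,β)))`. -/
theorem stmt2 (κ : Cardinal) (hreg : κ.IsRegular) (huncb : Cardinal.aleph 0 < κ)
    (C : Ordinal → Set Ordinal) (hC : IsCSeq κ.ord C) (α β γ : Ordinal)
    (h1 : lam2 C γ β < α) (h2 : α < γ) (h3 : γ < β) (h4 : β < κ.ord) :
    (rho2 C γ β ≤ rho2 C α β ∧ ∀ n < rho2 C γ β, TrW C α β n = TrW C γ β n) ∧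
      (γ ∈ trIm C α β ∨ γ ∈ accSet (C (sInf (trIm C γ β)))) := by
  have hγ0 : (0:Ordinal) < γ := lt_of_le_of_lt (zero_le (a := α)) h2
  have hα0 : (0:Ordinal) < α := lt_of_le_of_lt zero_le h1
  have hαβ : α < β := h2.trans h3
  have hreachγ : ∃ n, TrW C γ β n = γ := walk_reaches hC hγ0 h3 h4
  have hreachα : ∃ n, TrW C α β n = α := walk_reaches hC hα0 hαβ h4
  set ρ := rho2 C γ β with hρdef
  have hρmem : TrW C γ β ρ = γ := Nat.sInf_mem hreachγ
  have hgtγ : ∀ n < ρ, γ < TrW C γ β n := fun n hn =>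
    lt_of_le_of_ne (walk_bounds hC hγ0 h3 h4 n).1 (Ne.symm (Nat.notMem_of_lt_sInf hn))
  have sle : ∀ δ : Ordinal, sSup (C δ ∩ Set.Iio γ) ≤ γ := by
    intro δ
    rcases (C δ ∩ Set.Iio γ).eq_empty_or_nonempty with h | h
    · rw [h, csSup_empty]; exact bot_le
    · exact csSup_le h (fun x hx => hx.2.le)
  have seteq : ∀ δ ∈ trIm C γ β, sSup (C δ ∩ Set.Iio γ) < γ →
      C δ ∩ Set.Ici α = C δ ∩ Set.Ici γ := by
    intro δ hδ hs
    have hlam : sSup (C δ ∩ Set.Iio γ) ≤ lam2 C γ β :=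
      le_csSup (BddAbove.mono Set.inter_subset_left bddAbove_Iio) ⟨hs, δ, hδ, rfl⟩
    ext x
    constructor
    · rintro ⟨hx1, hx2⟩
      refine ⟨hx1, ?_⟩
      by_contra hxγ
      simp only [Set.mem_Ici, not_le] at hxγ
      have hxs : x ≤ sSup (C δ ∩ Set.Iio γ) :=
        le_csSup (BddAbove.mono Set.inter_subset_right bddAbove_Iio) ⟨hx1, hxγ⟩
      exact absurd hx2 (not_le.2 (lt_of_le_of_lt hxs (lt_of_le_of_lt hlam h1)))
    · rintro ⟨hx1, hx2⟩
      exact ⟨hx1, le_trans h2.le hx2⟩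
  have key : ∀ n, n < ρ → TrW C α β n = TrW C γ β n := by
    intro n
    induction n with
    | zero => intro _; rfl
    | succ n ih =>
      intro hn1
      have hn : n < ρ := Nat.lt_of_succ_lt hn1
      have hδγ : γ < TrW C γ β n := hgtγ n hn
      have hδκ : TrW C γ β n < κ.ord := lt_of_le_of_lt (walk_bounds hC hγ0 h3 h4 n).2 h4
      have hδtr : TrW C γ β n ∈ trIm C γ β := ⟨n, hn, rfl⟩
      have hs : sSup (C (TrW C γ β n) ∩ Set.Iio γ) < γ := by
        rcases lt_or_eq_of_le (sle (TrW C γ β n)) with h | h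
        · exact h
        · exfalso
          have hγC : γ ∈ C (TrW C γ β n) := (hC _ hδκ).2.2 γ hδγ hγ0 h
          have heq : TrW C γ β (n+1) = γ := by
            rw [TrW_succ, if_pos hδγ]
            refine le_antisymm (csInf_le (OrderBot.bddBelow _) ⟨hγC, le_refl γ⟩) ?_
            exact le_csInf ⟨γ, hγC, le_refl γ⟩ (fun x hx => hx.2)
          exact (Nat.notMem_of_lt_sInf hn1) heq
      rw [TrW_succ, TrW_succ, ih hn, if_pos hδγ, if_pos (h2.trans hδγ),
        seteq _ hδtr hs]
  have hρle : ρ ≤ rho2 C α β := by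
    refine le_csInf hreachα ?_
    intro n hn
    by_contra hlt
    push_neg at hlt
    have hkey := key n hlt
    have : TrW C α β n = α := hn
    rw [hkey] at this
    exact absurd this (ne_of_gt (h2.trans (hgtγ n hlt)))
  have hρpos : 0 < ρ := by
    rcases Nat.eq_zero_or_pos ρ with h | h
    · exfalso; rw [h] at hρmem; exact absurd hρmem (ne_of_gt h3)
    · exact h
  have hρeq : ρ - 1 + 1 = ρ := Nat.succ_pred_eq_of_pos hρpos
  have hρ1 : ρ - 1 < ρ := Nat.sub_lt hρpos one_pos
  set δl := TrW C γ β (ρ - 1) with hδldef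
  have hδlγ : γ < δl := hgtγ _ hρ1
  have hδlκ : δl < κ.ord := lt_of_le_of_lt (walk_bounds hC hγ0 h3 h4 _).2 h4
  have hδltr : δl ∈ trIm C γ β := ⟨ρ - 1, hρ1, rfl⟩
  have hstep : sInf (C δl ∩ Set.Ici γ) = γ := by
    have h' : TrW C γ β (ρ - 1 + 1) = sInf (C δl ∩ Set.Ici γ) := by
      rw [TrW_succ, if_pos hδlγ]
    rw [hρeq, hρmem] at h'
    exact h'.symm
  have hδl_sInf : sInf (trIm C γ β) = δl := by
    refine le_antisymm (csInf_le (OrderBot.bddBelow _) hδltr) ?_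
    refine le_csInf ⟨δl, hδltr⟩ ?_
    rintro x ⟨n, hn, rfl⟩
    exact walk_le hC hγ0 h3 h4 n (ρ - 1) (Nat.le_sub_one_of_lt hn) (Nat.sub_le ρ 1)
  refine ⟨⟨hρle, key⟩, ?_⟩
  rcases lt_or_eq_of_le (sle δl) with hs | hs
  · -- γ ∈ trIm C α β
    left
    have hTrρ : TrW C α β ρ = γ := by
      have h' : TrW C α β (ρ - 1 + 1) = sInf (C δl ∩ Set.Ici α) := by
        rw [TrW_succ, key (ρ - 1) hρ1, if_pos (h2.trans hδlγ)]
      rw [hρeq] at h'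
      rw [h', seteq δl hδltr hs, hstep]
    have hρlt : ρ < rho2 C α β := by
      refine lt_of_le_of_ne hρle (fun h => ?_)
      have hmemα : TrW C α β (rho2 C α β) = α := Nat.sInf_mem hreachα
      rw [← h, hTrρ] at hmemα
      exact absurd hmemα (ne_of_gt h2)
    exact ⟨ρ, hρlt, hTrρ⟩
  · -- γ ∈ accSet (C δl)
    right
    rw [hδl_sInf]
    have hγC : γ ∈ C δl := (hC δl hδlκ).2.2 γ hδlγ hγ0 hs
    exact ⟨hγC, hγ0, hs⟩
end

section
/- If a coloring c : [κ]² → θ witnesses U₁(κ,2,θ,χ), then F_{c,χ} := {T ⊆ θ : ∃𝒜 ∈ 𝔸^κ_χ with T_c(𝒜) ⊆ T} is a χ-complete filter on θ. -/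
open Cardinal Set

/-- A set (of a `Type 1`, such as sets of ordinals or families of such sets)
has cardinality exactly the (small) cardinal `κ`. -/
def cardEq {X : Type 1} (s : Set X) (κ : Cardinal.{0}) : Prop :=
  #s = Cardinal.lift.{1} κ

/-- A set has cardinality at most `κ`. -/
def cardLE {X : Type 1} (s : Set X) (κ : Cardinal.{0}) : Prop :=
  #s ≤ Cardinal.lift.{1} κ

/-- A set has cardinality less than `κ`. -/
def cardLT {X : Type 1} (s : Set X) (κ : Cardinal.{0}) : Prop :=
  #s < Cardinal.lift.{1} κ



/-- The set of ordinals `a` has order type (exactly) the ordinal `σ`. -/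
def otpEq (a : Set Ordinal) (σ : Ordinal.{0}) : Prop :=
  Ordinal.type ((· < ·) : a → a → Prop) = Ordinal.lift.{1} σ

/-- `a < b` elementwise: every element of `a` is below every element of `b`. -/
def setBelow (a b : Set Ordinal) : Prop := ∀ x ∈ a, ∀ y ∈ b, x < y

/-- `c[a × b] = {τ}`: the coloring `c` is constantly `τ` on `a × b`. -/
def constOn (c : Ordinal → Ordinal → Ordinal) (a b : Set Ordinal) (τ : Ordinal) : Prop :=
  Set.image2 c a b = {τ}

/-- `𝒜` is a `κ`-sized pairwise disjoint subfamily of `[κ]^σ`. -/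
def KappaFam (κ : Cardinal.{0}) (σ : Ordinal) (𝒜 : Set (Set Ordinal)) : Prop :=
  (∀ a ∈ 𝒜, a ⊆ Set.Iio κ.ord ∧ otpEq a σ) ∧ 𝒜.PairwiseDisjoint id ∧ cardEq 𝒜 κ

/-- `c` witnesses `Pr₁(κ, κ, θ, χ)`. -/
def IsPr1 (κ θ χ : Cardinal.{0}) (c : Ordinal → Ordinal → Ordinal) : Prop :=
  ∀ σ < χ.ord, ∀ 𝒜 : Set (Set Ordinal), KappaFam κ σ 𝒜 →
    ∀ ξ < θ.ord, ∃ a ∈ 𝒜, ∃ b ∈ 𝒜, setBelow a b ∧ constOn c a b ξ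

/-- `Pr₁(κ, κ, θ, χ)`. -/
def Pr1 (κ θ χ : Cardinal.{0}) : Prop :=
  ∃ c : Ordinal → Ordinal → Ordinal,
    (∀ α β : Ordinal, α < β → β < κ.ord → c α β < θ.ord) ∧ IsPr1 κ θ χ c

/-- `c` witnesses `U₁(κ, 2, θ, χ)`. -/
def IsU1 (κ θ χ : Cardinal.{0}) (c : Ordinal → Ordinal → Ordinal) : Prop :=
  ∀ σ < χ.ord, ∀ 𝒜 : Set (Set Ordinal), KappaFam κ σ 𝒜 →
    ∀ ε < θ.ord, ∃ a ∈ 𝒜, ∃ b ∈ 𝒜, setBelow a b ∧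
      ∃ τ, ε < τ ∧ τ < θ.ord ∧ constOn c a b τ

/-- `U₁(κ, 2, θ, χ)`. -/
def U1 (κ θ χ : Cardinal.{0}) : Prop :=
  ∃ c : Ordinal → Ordinal → Ordinal,
    (∀ α β : Ordinal, α < β → β < κ.ord → c α β < θ.ord) ∧ IsU1 κ θ χ c

/-- `c` witnesses `U(κ, μ, θ, χ)`. -/
def IsU (κ μ θ χ : Cardinal.{0}) (c : Ordinal → Ordinal → Ordinal) : Prop :=
  ∀ σ < χ.ord, ∀ 𝒜 : Set (Set Ordinal), KappaFam κ σ 𝒜 →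
    ∀ τ < θ.ord, ∃ ℬ ⊆ 𝒜, cardEq ℬ μ ∧
      ∀ a ∈ ℬ, ∀ b ∈ ℬ, setBelow a b → ∀ z ∈ Set.image2 c a b, τ ≤ z

/-- `𝒜 ∈ 𝔸^κ_χ`: a pairwise disjoint family of `κ` many (nonempty) subsets of `κ`,
with the supremum of the cardinalities of its members below `χ`. -/
def AFam (κ χ : Cardinal.{0}) (𝒜 : Set (Set Ordinal)) : Prop :=
  (∀ a ∈ 𝒜, a ⊆ Set.Iio κ.ord ∧ a.Nonempty) ∧ 𝒜.PairwiseDisjoint id ∧ cardEq 𝒜 κ ∧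
    ∃ ν < χ, ∀ a ∈ 𝒜, cardLE a ν

/-- `T_c(𝒜)`: the set of `τ < θ` so that `c[a × b] = {τ}` for some `a < b` from `𝒜`. -/
def Tc (θ : Cardinal.{0}) (c : Ordinal → Ordinal → Ordinal) (𝒜 : Set (Set Ordinal)) :
    Set Ordinal :=
  {τ | τ < θ.ord ∧ ∃ a ∈ 𝒜, ∃ b ∈ 𝒜, setBelow a b ∧ constOn c a b τ}

/-- The collection `F_{c,χ}` of subsets of `θ` containing some `T_c(𝒜)`, `𝒜 ∈ 𝔸^κ_χ`. -/
def Fc (κ θ χ : Cardinal.{0}) (c : Ordinal → Ordinal → Ordinal) : Set (Set Ordinal) :=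
  {T | T ⊆ Set.Iio θ.ord ∧ ∃ 𝒜 : Set (Set Ordinal), AFam κ χ 𝒜 ∧ Tc θ c 𝒜 ⊆ T}

/-- `F` is a (proper) `χ`-complete filter on `θ`. -/
def IsNiceFilter (θ χ : Cardinal.{0}) (F : Set (Set Ordinal)) : Prop :=
  (∀ T ∈ F, T ⊆ Set.Iio θ.ord) ∧ Set.Iio θ.ord ∈ F ∧ ∅ ∉ F ∧
    (∀ S ∈ F, ∀ T, S ⊆ T → T ⊆ Set.Iio θ.ord → T ∈ F) ∧
    (∀ I : Set (Set Ordinal), I ⊆ F → I.Nonempty → cardLT I χ → ⋂₀ I ∈ F)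

/-- `F` is a `χ`-complete uniform filter on `θ`. -/
def IsUniformFilter (θ χ : Cardinal.{0}) (F : Set (Set Ordinal)) : Prop :=
  IsNiceFilter θ χ F ∧ ∀ T ∈ F, cardEq T θ

/-- `X` is `F`-positive. -/
def FPos (F : Set (Set Ordinal)) (X : Set Ordinal) : Prop :=
  ∀ T ∈ F, (X ∩ T).Nonempty

/-! Upward closure is immediate, and `θ ∈ F_{c,χ}` is witnessed by the family of singletons.

Properness: a family `𝒜 ∈ 𝔸^κ_χ` has, by pigeonhole over the fewer than `κ` order types below
`χ`, a subfamily of size `κ` whose members all have the same order type `σ < χ`; so `U₁` makes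
`T_c(𝒜)` unbounded in `θ`, in particular nonempty.

`χ`-completeness: given fewer than `χ` families `𝒜ᵢ ∈ 𝔸^κ_χ`, build by recursion on `α < κ`
blocks `b_α`, each the union of one member of every `𝒜ᵢ` lying above all earlier blocks; the
regularity of `κ` and `χ` keeps the recursion below `κ` and the blocks of size `< χ`. Then
`ℬ = {b_α} ∈ 𝔸^κ_χ`, and a colour constant on `b_α × b_β` is constant on the members of `𝒜ᵢ`
inside them, so `T_c(ℬ) ⊆ ⋂ᵢ T_c(𝒜ᵢ)`. -/

theorem lift_mk_lt_cof_of_isRegular {κ : Cardinal.{0}} (hκ : κ.IsRegular) {s : Type 1}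
    (hs : #s < Cardinal.lift.{1} κ) : Cardinal.lift.{0} #s < (Ordinal.lift.{1} κ.ord).cof := by
  rwa [Cardinal.lift_id'.{0,1}, ← Ordinal.lift_cof, hκ.cof_ord]

theorem exists_lt_forall_le_of_isRegular {χ : Cardinal.{0}} (hχ : χ.IsRegular) {ι : Type 1}
    (hι : #ι < Cardinal.lift.{1} χ) {ν : ι → Cardinal.{0}} (hν : ∀ i, ν i < χ) :
    ∃ μ < χ, ∀ i, ν i ≤ μ :=
  ⟨⨆ i, ν i,
    Cardinal.lift_iSup_lt_of_lt_cof_ord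
      (by rw [← Cardinal.lift_ord]; exact lift_mk_lt_cof_of_isRegular hχ hι) hν,
    le_ciSup ⟨χ, forall_mem_range.2 fun i => (hν i).le⟩⟩

theorem exists_lt_ord_forall_lt_of_mk_lt {κ : Cardinal.{0}} (hκ : κ.IsRegular)
    {s : Set Ordinal.{0}} (hs : s ⊆ Iio κ.ord) (hcard : #s < Cardinal.lift.{1} κ) :
    ∃ δ < κ.ord, ∀ x ∈ s, x < δ := by
  have hbdd : BddAbove (range fun x : s => x.1 + 1) :=
    ⟨κ.ord, forall_mem_range.2 fun x => Order.add_one_le_of_lt (hs x.2)⟩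
  exact ⟨⨆ x : s, x.1 + 1,
    Ordinal.lift_iSup_add_one_lt_of_lt_cof (lift_mk_lt_cof_of_isRegular hκ hcard) fun x => hs x.2,
    fun x hx => (Order.lt_add_one_iff.2 le_rfl).trans_le (le_ciSup hbdd ⟨x, hx⟩)⟩

theorem exists_seq_map_le_of_lt {κ : Cardinal.{0}} (hκ : κ.IsRegular)
    (g : Iio κ.ord → Iio κ.ord) :
    ∃ f : Iio κ.ord → Iio κ.ord, ∀ α β, β < α → g (f β) ≤ f α := by
  have hlt (α : Iio κ.ord) : #(Iio α.1) < Cardinal.lift.{1} κ := by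
    rw [Cardinal.mk_Iio_ordinal, Cardinal.lift_lt, ← Cardinal.lt_ord]
    exact α.2
  let f : Iio κ.ord → Iio κ.ord := wellFounded_lt.fix fun α IH =>
    ⟨⨆ β : Iio α.1, (g (IH ⟨β, mem_Iio.2 ((mem_Iio.1 β.2).trans α.2)⟩ β.2)).1,
      Ordinal.lift_iSup_lt_of_lt_cof (lift_mk_lt_cof_of_isRegular hκ (hlt α)) fun β => (g _).2⟩
  refine ⟨f, fun α β hβα => ?_⟩
  change (g (f β)).1 ≤ (f α).1
  rw [show f α = _ from wellFounded_lt.fix_eq _ α]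
  exact le_ciSup Ordinal.bddAbove_of_small (⟨β.1, hβα⟩ : Iio α.1)

theorem exists_seq_setBelow {κ : Cardinal.{0}} (hκ : κ.IsRegular) (P : Iio κ.ord → Set Ordinal)
    (hP : ∀ γ, P γ ⊆ Ici γ.1 ∩ Iio κ.ord) (hcard : ∀ γ, #(P γ) < Cardinal.lift.{1} κ) :
    ∃ f : Iio κ.ord → Iio κ.ord, ∀ α β, β < α → setBelow (P (f β)) (P (f α)) := by
  choose g hg hPg using fun γ =>
    exists_lt_ord_forall_lt_of_mk_lt hκ (fun x hx => (hP γ hx).2) (hcard γ)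
  obtain ⟨f, hf⟩ := exists_seq_map_le_of_lt hκ fun γ => ⟨g γ, hg γ⟩
  exact ⟨f, fun α β hβα x hx y hy =>
    (hPg _ x hx).trans_le ((Subtype.coe_le_coe.2 (hf α β hβα)).trans (hP _ hy).1)⟩

theorem disjoint_of_setBelow {a b : Set Ordinal} (h : setBelow a b) : Disjoint a b :=
  disjoint_left.2 fun x hxa hxb => lt_irrefl x (h x hxa x hxb)

theorem aFam_range_of_setBelow {κ χ ν : Cardinal.{0}} {B : Iio κ.ord → Set Ordinal}
    (hB : ∀ α, B α ⊆ Iio κ.ord ∧ (B α).Nonempty) (hB_lt : ∀ α β, β < α → setBelow (B β) (B α))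
    (hν : ν < χ) (hBν : ∀ α, cardLE (B α) ν) : AFam κ χ (range B) := by
  have hdisj : ∀ α β, α ≠ β → Disjoint (B α) (B β) := fun α β hne =>
    (lt_or_gt_of_ne hne).elim (fun h => disjoint_of_setBelow (hB_lt β α h))
      fun h => (disjoint_of_setBelow (hB_lt α β h)).symm
  have hinj : Function.Injective B := fun α β h => by_contra fun hne =>
    (hB β).2.ne_empty (disjoint_self.1 (h ▸ hdisj α β hne))
  refine ⟨forall_mem_range.2 hB, ?_, ?_, ν, hν, forall_mem_range.2 hBν⟩
  · rintro _ ⟨α, rfl⟩ _ ⟨β, rfl⟩ hne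
    exact hdisj α β fun h => hne (congrArg B h)
  · rw [cardEq, Cardinal.mk_range_eq B hinj, Cardinal.mk_Iio_ordinal, Cardinal.card_ord]

theorem exists_mem_forall_le_of_pairwiseDisjoint {𝒜 : Set (Set Ordinal.{0})}
    (hdisj : 𝒜.PairwiseDisjoint id) {γ : Ordinal.{0}} (hγ : Cardinal.lift.{1} γ.card < #𝒜) :
    ∃ a ∈ 𝒜, ∀ x ∈ a, γ ≤ x := by
  by_contra! h
  choose g hg hgγ using fun a : 𝒜 => h a a.2
  have hinj : Function.Injective fun a : 𝒜 => (⟨g a, hgγ a⟩ : Iio γ) := by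
    intro a b hab
    by_contra hne
    have hgab : g a = g b := congrArg Subtype.val hab
    exact disjoint_left.1 (hdisj a.2 b.2 (Subtype.coe_ne_coe.2 hne)) (hg a) (hgab ▸ hg b)
  exact (Cardinal.mk_le_of_injective hinj).not_gt (by rwa [Cardinal.mk_Iio_ordinal])

theorem exists_otpEq_lt_ord {χ ν : Cardinal.{0}} {a : Set Ordinal.{0}} (hν : ν < χ)
    (ha : cardLE a ν) : ∃ σ < χ.ord, otpEq a σ := by
  have htype : Ordinal.type ((· < ·) : a → a → Prop) < Ordinal.lift.{1} χ.ord := by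
    rw [Cardinal.lift_ord, Cardinal.lt_ord, Ordinal.card_type]
    exact lt_of_le_of_lt ha (Cardinal.lift_lt.2 hν)
  obtain ⟨σ, hσ⟩ := Ordinal.mem_range_lift_of_le htype.le
  exact ⟨σ, Ordinal.lift_lt.1 (hσ ▸ htype), hσ.symm⟩

theorem AFam.exists_kappaFam_subset {κ χ : Cardinal.{0}} {𝒜 : Set (Set Ordinal)}
    (h𝒜 : AFam κ χ 𝒜) (hκ : κ.IsRegular) (hχκ : χ < κ) :
    ∃ σ < χ.ord, ∃ 𝒜' ⊆ 𝒜, KappaFam κ σ 𝒜' := by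
  obtain ⟨hsub, hdisj, hcard, ν, hν, hsize⟩ := h𝒜
  choose f hfχ hf using fun a : 𝒜 => exists_otpEq_lt_ord hν (hsize a a.2)
  obtain ⟨σ, hσ⟩ := Cardinal.infinite_pigeonhole_card
    (fun a : 𝒜 => (⟨f a, hfχ a⟩ : Iio χ.ord)) (Cardinal.lift.{1} κ) hcard.ge
    (Cardinal.aleph0_le_lift.2 hκ.aleph0_le)
    (by rw [Cardinal.mk_Iio_ordinal, Cardinal.card_ord, ← Cardinal.lift_ord, ← Ordinal.lift_cof,
      hκ.cof_ord, Cardinal.lift_lt]; exact hχκ)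
  have hfiber : Subtype.val '' ((fun a : 𝒜 => (⟨f a, hfχ a⟩ : Iio χ.ord)) ⁻¹' {σ}) ⊆ 𝒜 :=
    image_subset_iff.2 fun a _ => a.2
  refine ⟨σ, σ.2, _, hfiber, ?_, hdisj.subset hfiber, ?_⟩
  · rintro _ ⟨a, ha, rfl⟩
    exact ⟨(hsub a a.2).1, (congrArg Subtype.val ha : f a = σ) ▸ hf a⟩
  · refine le_antisymm (hcard ▸ Cardinal.mk_le_mk_of_subset hfiber) ?_
    rwa [Cardinal.mk_image_eq Subtype.val_injective]

theorem AFam.exists_mem_tc_gt {κ θ χ : Cardinal.{0}} {c : Ordinal → Ordinal → Ordinal}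
    {𝒜 : Set (Set Ordinal)} (h𝒜 : AFam κ χ 𝒜) (hκ : κ.IsRegular) (hχκ : χ < κ)
    (hc : IsU1 κ θ χ c) {ε : Ordinal} (hε : ε < θ.ord) : ∃ τ ∈ Tc θ c 𝒜, ε < τ := by
  obtain ⟨σ, hσ, 𝒜', h𝒜'𝒜, h𝒜'⟩ := h𝒜.exists_kappaFam_subset hκ hχκ
  obtain ⟨a, ha, b, hb, hab, τ, hετ, hτ, hconst⟩ := hc σ hσ 𝒜' h𝒜' ε hε
  exact ⟨τ, ⟨hτ, a, h𝒜'𝒜 ha, b, h𝒜'𝒜 hb, hab, hconst⟩, hετ⟩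

def Refines (ℬ 𝒜 : Set (Set Ordinal)) : Prop :=
  ∀ b ∈ ℬ, ∃ a ∈ 𝒜, a ⊆ b

theorem constOn.mono {c : Ordinal → Ordinal → Ordinal} {a b a' b' : Set Ordinal} {τ : Ordinal}
    (h : constOn c a b τ) (ha : a' ⊆ a) (hb : b' ⊆ b) (ha' : a'.Nonempty) (hb' : b'.Nonempty) :
    constOn c a' b' τ :=
  (ha'.image2 hb').subset_singleton_iff.1 (h ▸ image2_subset ha hb)

theorem Refines.tc_subset {ℬ 𝒜 : Set (Set Ordinal)} (h : Refines ℬ 𝒜)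
    (h𝒜 : ∀ a ∈ 𝒜, a.Nonempty) (θ : Cardinal.{0}) (c : Ordinal → Ordinal → Ordinal) :
    Tc θ c ℬ ⊆ Tc θ c 𝒜 := by
  rintro τ ⟨hτ, b, hb, b', hb', hbb', hc⟩
  obtain ⟨a, ha, hab⟩ := h b hb
  obtain ⟨a', ha', hab'⟩ := h b' hb'
  exact ⟨hτ, a, ha, a', ha', fun x hx y hy => hbb' x (hab hx) y (hab' hy),
    hc.mono hab hab' (h𝒜 a ha) (h𝒜 a' ha')⟩

theorem exists_aFam_forall_refines {κ χ : Cardinal.{0}} (hκ : κ.IsRegular) (hχ : χ.IsRegular)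
    (hχκ : χ < κ) {ι : Type 1} [Nonempty ι] (hι : #ι < Cardinal.lift.{1} χ)
    {𝒜 : ι → Set (Set Ordinal)} (h𝒜 : ∀ i, AFam κ χ (𝒜 i)) :
    ∃ ℬ, AFam κ χ ℬ ∧ ∀ i, Refines ℬ (𝒜 i) := by
  choose ν hνχ hν using fun i => (h𝒜 i).2.2.2
  obtain ⟨ν₀, hν₀χ, hν₀⟩ := exists_lt_forall_le_of_isRegular hχ hι hνχ
  obtain ⟨μ, hμ⟩ := Cardinal.mem_range_lift_of_le hι.le
  have hμν : μ * ν₀ < χ :=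
    Cardinal.mul_lt_of_lt hχ.aleph0_le (Cardinal.lift_lt.1 (hμ ▸ hι)) hν₀χ
  choose a ha haγ using fun i (γ : Iio κ.ord) =>
    exists_mem_forall_le_of_pairwiseDisjoint (h𝒜 i).2.1
      (by rw [(h𝒜 i).2.2.1, Cardinal.lift_lt, ← Cardinal.lt_ord]; exact γ.2)
  let P : Iio κ.ord → Set Ordinal := fun γ => ⋃ i, a i γ
  have hPsub (γ : Iio κ.ord) : P γ ⊆ Ici γ.1 ∩ Iio κ.ord :=
    iUnion_subset fun i _ hx => ⟨haγ i γ _ hx, ((h𝒜 i).1 _ (ha i γ)).1 hx⟩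
  have hPcard (γ : Iio κ.ord) : cardLE (P γ) (μ * ν₀) := calc
    #(P γ) ≤ #ι * ⨆ i, #(a i γ) := Cardinal.mk_iUnion_le _
    _ ≤ Cardinal.lift.{1} μ * Cardinal.lift.{1} ν₀ :=
      mul_le_mul' hμ.ge (ciSup_le' fun i =>
        (hν i _ (ha i γ)).trans (Cardinal.lift_le.2 (hν₀ i)))
    _ = Cardinal.lift.{1} (μ * ν₀) := (Cardinal.lift_mul _ _).symm
  obtain ⟨f, hf⟩ := exists_seq_setBelow hκ P hPsub fun γ =>
    (hPcard γ).trans_lt (Cardinal.lift_lt.2 (hμν.trans hχκ))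
  refine ⟨range (P ∘ f), aFam_range_of_setBelow (fun α => ⟨(hPsub _).trans inter_subset_right, ?_⟩)
    hf hμν fun α => hPcard _, fun i => ?_⟩
  · obtain ⟨i⟩ := ‹Nonempty ι›
    exact ((h𝒜 i).1 _ (ha i (f α))).2.mono (subset_iUnion (fun i => a i (f α)) i)
  · rintro _ ⟨α, rfl⟩
    exact ⟨a i (f α), ha i (f α), subset_iUnion (fun i => a i (f α)) i⟩

theorem stmt4_general (κ θ χ : Cardinal) (hκ : κ.IsRegular) (hχ : χ.IsRegular)
    (hθ : θ.IsRegular) (hχκ : χ < κ)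
    (c : Ordinal → Ordinal → Ordinal)
    (hc : IsU1 κ θ χ c) :
    IsNiceFilter θ χ (Fc κ θ χ c) := by
  have hsingletons : AFam κ χ (range fun α : Iio κ.ord => ({α.1} : Set Ordinal)) :=
    aFam_range_of_setBelow (fun α => ⟨singleton_subset_iff.2 α.2, singleton_nonempty _⟩)
      (fun α β h => by rintro x rfl y rfl; exact h) (Cardinal.one_lt_aleph0.trans_le hχ.aleph0_le)
      fun α => by simp [cardLE]
  refine ⟨fun T hT => hT.1, ⟨subset_rfl, _, hsingletons, fun τ hτ => hτ.1⟩, ?_, ?_, ?_⟩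
  · rintro ⟨-, 𝒜, h𝒜, hT⟩
    obtain ⟨τ, hτ, -⟩ := h𝒜.exists_mem_tc_gt hκ hχκ hc (Cardinal.ord_pos.2 hθ.pos)
    exact hT hτ
  · rintro S ⟨-, 𝒜, h𝒜, hS⟩ T hST hT
    exact ⟨hT, 𝒜, h𝒜, hS.trans hST⟩
  · intro I hIF hI hIχ
    choose 𝒜 h𝒜 hT using fun T : I => (hIF T.2).2
    have : Nonempty I := hI.to_subtype
    obtain ⟨ℬ, hℬ, hrefines⟩ := exists_aFam_forall_refines hκ hχ hχκ hIχ h𝒜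
    obtain ⟨T₀, hT₀⟩ := hI
    refine ⟨(sInter_subset_of_mem hT₀).trans (hIF hT₀).1, ℬ, hℬ, subset_sInter fun T hT' => ?_⟩
    exact ((hrefines ⟨T, hT'⟩).tc_subset (fun a ha => ((h𝒜 _).1 a ha).2) θ c).trans (hT ⟨T, hT'⟩)

/-- If `c` witnesses `U₁(κ,2,θ,χ)`, then `F_{c,χ}` is a `χ`-complete (proper) filter on `θ`. -/
theorem stmt4 (κ θ χ : Cardinal) (hκ : κ.IsRegular) (hχ : χ.IsRegular)
    (hθ : θ.IsRegular) (hχκ : χ < κ) (hθκ : θ ≤ κ)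
    (c : Ordinal → Ordinal → Ordinal)
    (hrange : ∀ α β : Ordinal, α < β → β < κ.ord → c α β < θ.ord)
    (hc : IsU1 κ θ χ c) :
    IsNiceFilter θ χ (Fc κ θ χ c) :=
  stmt4_general κ θ χ hκ hχ hθ hχκ c hc
end

section
/- If a coloring c : [κ]² → θ witnesses U₁(κ,2,θ,χ), then the filter F_{c,χ} is uniform, i.e., every set in F_{c,χ} is a cofinal (hence size-θ) subset of θ. -/
open Cardinal Set

private lemma liftRegular {κ : Cardinal.{0}} (hκ : κ.IsRegular) :
    (Cardinal.lift.{1} κ).IsRegular := by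
  constructor
  · simpa using hκ.1
  · rw [← Cardinal.lift_ord, ← Ordinal.lift_cof, hκ.cof_eq]

private lemma exists_fiber {α β : Type 1} (F : α → β) {κ : Cardinal.{0}}
    (hκ : κ.IsRegular) (hα : #α = Cardinal.lift.{1} κ) (hβ : #β < Cardinal.lift.{1} κ) :
    ∃ b : β, #(F ⁻¹' {b}) = Cardinal.lift.{1} κ := by
  by_contra h
  push_neg at h
  have hlt : ∀ b : β, #(F ⁻¹' {b}) < Cardinal.lift.{1} κ := fun b =>
    lt_of_le_of_ne (hα ▸ Cardinal.mk_set_le _) (h b)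
  have hsum : #α = Cardinal.sum fun b : β => #(F ⁻¹' {b}) := by
    rw [← Cardinal.mk_sigma]
    exact Cardinal.mk_congr (Equiv.sigmaFiberEquiv F).symm
  have := Cardinal.sum_lt_of_isRegular (liftRegular hκ) hβ hlt
  rw [← hsum, hα] at this
  exact lt_irrefl _ this

/-- If `c` witnesses `U₁(κ,2,θ,χ)`, then the filter `F_{c,χ}` is uniform:
every member is cofinal in `θ`, and hence of size `θ`. -/
theorem stmt5 (κ θ χ : Cardinal) (hκ : κ.IsRegular) (hχ : χ.IsRegular)
    (hθ : θ.IsRegular) (hχκ : χ < κ) (hθκ : θ ≤ κ)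
    (c : Ordinal → Ordinal → Ordinal)
    (hrange : ∀ α β : Ordinal, α < β → β < κ.ord → c α β < θ.ord)
    (hc : IsU1 κ θ χ c) :
    ∀ T ∈ Fc κ θ χ c, (∀ ε < θ.ord, ∃ τ ∈ T, ε < τ) ∧ cardEq T θ := by
  rintro T ⟨hTsub, 𝒜, ⟨h1, h2, h3, ν, hν, hνcard⟩, hTc⟩
  -- each member of 𝒜 has order type some σ < χ.ord
  have hot : ∀ a : 𝒜, ∃ σ : Ordinal.{0}, σ < χ.ord ∧
      Ordinal.type ((· < ·) : a.1 → a.1 → Prop) = Ordinal.lift.{1} σ := by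
    intro a
    have hcard : #a.1 ≤ Cardinal.lift.{1} ν := hνcard a.1 a.2
    have hlt : Ordinal.type ((· < ·) : a.1 → a.1 → Prop) < Ordinal.lift.{1} χ.ord := by
      rw [Cardinal.lift_ord, Cardinal.lt_ord, Ordinal.card_type]
      exact hcard.trans_lt (Cardinal.lift_lt.2 hν)
    obtain ⟨σ, hσχ, hσ⟩ := Ordinal.lt_lift_iff.1 hlt
    exact ⟨σ, hσχ, hσ.symm⟩
  choose f hfχ hf using hot
  set F : 𝒜 → (Set.Iio χ.ord : Set Ordinal) := fun a => ⟨f a, hfχ a⟩ with hF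
  have hIio : #(Set.Iio χ.ord : Set Ordinal) < Cardinal.lift.{1} κ := by
    rw [Ordinal.mk_Iio_ordinal, Cardinal.card_ord]
    exact Cardinal.lift_lt.2 hχκ
  obtain ⟨σ0, hσ0⟩ := exists_fiber F hκ h3 hIio
  set ℬ : Set (Set Ordinal) := {a | ∃ h : a ∈ 𝒜, F ⟨a, h⟩ = σ0} with hℬdef
  have hℬ𝒜 : ℬ ⊆ 𝒜 := fun a ha => ha.1
  have hcardℬ : #ℬ = Cardinal.lift.{1} κ := by
    rw [← hσ0]
    have e : ↥(F ⁻¹' {σ0}) ≃ ↥ℬ :=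
      { toFun := fun x => ⟨x.1.1, x.1.2, x.2⟩
        invFun := fun y => ⟨⟨y.1, y.2.choose⟩, y.2.choose_spec⟩
        left_inv := fun x => Subtype.ext (Subtype.ext rfl)
        right_inv := fun y => Subtype.ext rfl }
    exact Cardinal.mk_congr e.symm
  have hKF : KappaFam κ σ0.1 ℬ := by
    refine ⟨?_, h2.subset hℬ𝒜, hcardℬ⟩
    intro a ha
    refine ⟨(h1 a (hℬ𝒜 ha)).1, ?_⟩
    obtain ⟨h, hFa⟩ := ha
    show Ordinal.type ((· < ·) : a → a → Prop) = Ordinal.lift.{1} σ0.1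
    rw [hf ⟨a, h⟩]
    exact congrArg _ (congrArg Subtype.val hFa)
  have hcof0 : ∀ ε < θ.ord, ∃ τ ∈ T, ε < τ := by
    intro ε hε
    obtain ⟨a, ha, b, hb, hab, τ, hετ, hτθ, hconst⟩ := hc σ0.1 σ0.2 ℬ hKF ε hε
    exact ⟨τ, hTc ⟨hτθ, a, hℬ𝒜 ha, b, hℬ𝒜 hb, hab, hconst⟩, hετ⟩
  refine ⟨hcof0, ?_⟩
  show #T = Cardinal.lift.{1} θ
  apply le_antisymm
  · calc #T ≤ #(Set.Iio θ.ord : Set Ordinal) := Cardinal.mk_le_mk_of_subset hTsub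
      _ = Cardinal.lift.{1} θ := by rw [Ordinal.mk_Iio_ordinal, Cardinal.card_ord]
  · have hlsub : Ordinal.lsub.{1,1} (fun τ : T => Ordinal.lift.{1} τ.1)
        = Ordinal.lift.{1} θ.ord := by
      apply le_antisymm
      · exact Ordinal.lsub_le fun τ => Ordinal.lift_lt.2 (hTsub τ.2)
      · by_contra hlt
        push_neg at hlt
        obtain ⟨ε, hεθ, hε⟩ := Ordinal.lt_lift_iff.{0,1}.1 hlt
        obtain ⟨τ, hτT, hετ⟩ := hcof0 ε hεθ
        have := Ordinal.lt_lsub.{1,1} (fun τ : T => Ordinal.lift.{1} τ.1) ⟨τ, hτT⟩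
        rw [← hε, Ordinal.lift_lt] at this
        exact absurd hετ (not_lt.2 this.le)
    have hcof : Ordinal.cof (Ordinal.lift.{1} θ.ord) ≤ #T :=
      hlsub ▸ Ordinal.cof_lsub_le.{1} _
    rw [← hθ.cof_eq, Ordinal.lift_cof]
    exact hcof
end

section
/- Suppose c : [κ]² → θ witnesses U₁(κ,2,θ,χ), and suppose ψ : θ → λ is a map such that ψ⁻¹{ξ} is F_{c,χ}-positive for every ξ < λ (i.e., meets every member of F_{c,χ}). Then ψ ∘ c witnesses Pr₁(κ,κ,λ,χ). -/
open Cardinal Set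

/-- If `c` witnesses `U₁(κ,2,θ,χ)` and `ψ : θ → λ` has all of its fibers
`F_{c,χ}`-positive, then `ψ ∘ c` witnesses `Pr₁(κ,κ,λ,χ)`. -/
theorem stmt6 (κ θ χ lam : Cardinal) (hκ : κ.IsRegular) (hχ : χ.IsRegular)
    (hθ : θ.IsRegular) (hχκ : χ < κ) (hθκ : θ ≤ κ)
    (c : Ordinal → Ordinal → Ordinal)
    (hrange : ∀ α β : Ordinal, α < β → β < κ.ord → c α β < θ.ord)
    (hc : IsU1 κ θ χ c)
    (ψ : Ordinal → Ordinal) (hψrange : ∀ τ < θ.ord, ψ τ < lam.ord)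
    (hψ : ∀ ξ < lam.ord, FPos (Fc κ θ χ c) {τ | τ < θ.ord ∧ ψ τ = ξ}) :
    IsPr1 κ lam χ (fun α β => ψ (c α β)) := by
  intro σ hσ 𝒜 h𝒜 ξ hξ
  obtain ⟨hmem, hdisj, hcard⟩ := h𝒜
  -- every member of 𝒜 is nonempty
  have hne : ∀ a ∈ 𝒜, a.Nonempty := by
    intro a ha
    rcases Set.eq_empty_or_nonempty a with he | h
    · exfalso
      -- then σ = 0, so all members are empty, so #𝒜 ≤ 1
      have hσ0 : Ordinal.lift.{1} σ = 0 := by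
        rw [← (hmem a ha).2]
        exact Ordinal.type_eq_zero_iff_isEmpty.mpr (by rw [he]; infer_instance)
      have hsub : 𝒜 ⊆ {(∅ : Set Ordinal)} := by
        intro b hb
        have hb2 := (hmem b hb).2
        rw [otpEq, hσ0, Ordinal.type_eq_zero_iff_isEmpty] at hb2
        simp only [Set.mem_singleton_iff]
        exact Set.isEmpty_coe_sort.mp hb2
      have h1 : #𝒜 ≤ 1 := by
        calc #𝒜 ≤ #({(∅ : Set Ordinal)} : Set (Set Ordinal)) := Cardinal.mk_le_mk_of_subset hsub
        _ = 1 := Cardinal.mk_singleton _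
      rw [cardEq] at hcard
      rw [hcard] at h1
      have : (1 : Cardinal.{1}) < Cardinal.lift.{1} κ := by
        have := hκ.aleph0_le
        have h2 : Cardinal.lift.{1} Cardinal.aleph0 ≤ Cardinal.lift.{1} κ :=
          Cardinal.lift_le.mpr this
        rw [Cardinal.lift_aleph0] at h2
        exact lt_of_lt_of_le Cardinal.one_lt_aleph0 h2
      exact absurd h1 (not_le.mpr this)
    · exact h
  -- 𝒜 is an AFam
  have hAF : AFam κ χ 𝒜 := by
    refine ⟨fun a ha => ⟨(hmem a ha).1, hne a ha⟩, hdisj, hcard, σ.card, ?_, ?_⟩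
    · exact (Cardinal.lt_ord).mp hσ
    · intro a ha
      have h2 := (hmem a ha).2
      rw [cardLE]
      calc #a = (Ordinal.type ((· < ·) : a → a → Prop)).card := (Ordinal.card_type _).symm
      _ = (Ordinal.lift.{1} σ).card := by rw [h2]
      _ = Cardinal.lift.{1} σ.card := (Ordinal.lift_card _).symm
      _ ≤ Cardinal.lift.{1} σ.card := le_rfl
  -- T_c(𝒜) belongs to Fc
  have hT : Tc θ c 𝒜 ∈ Fc κ θ χ c := by
    refine ⟨fun τ hτ => hτ.1, 𝒜, hAF, subset_rfl⟩
  obtain ⟨τ, hτξ, hτT⟩ := hψ ξ hξ (Tc θ c 𝒜) hT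
  obtain ⟨_, hψτ⟩ := hτξ
  obtain ⟨_, a, ha, b, hb, hab, hconst⟩ := hτT
  refine ⟨a, ha, b, hb, hab, ?_⟩
  rw [constOn]
  have : Set.image2 (fun α β => ψ (c α β)) a b = ψ '' (Set.image2 c a b) :=
    (Set.image_image2 c ψ).symm
  rw [this, hconst, Set.image_singleton, hψτ]
end

section
/- If no χ-complete uniform filter on θ is weakly λ-saturated and U₁(κ,2,θ,χ) holds, then Pr₁(κ,κ,λ,χ) holds. -/
open Cardinal Set

lemma aux_isRegular_lift {c : Cardinal.{0}} (h : c.IsRegular) :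
    (Cardinal.lift.{1} c).IsRegular := by
  constructor
  · simpa using h.aleph0_le
  · rw [← Cardinal.lift_ord, ← Ordinal.lift_cof, h.cof_eq]

lemma aux_pigeon {α β : Type 1} {κ : Cardinal.{0}} (hκ : κ.IsRegular)
    (hα : #α = Cardinal.lift.{1} κ) (hβ : #β < Cardinal.lift.{1} κ) (f : α → β) :
    ∃ b : β, #{a : α // f a = b} = Cardinal.lift.{1} κ := by
  by_contra h
  push_neg at h
  have hfib : ∀ b, #{a : α // f a = b} < Cardinal.lift.{1} κ := fun b =>
    lt_of_le_of_ne (hα ▸ Cardinal.mk_subtype_le _) (h b)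
  have hsum : #α = Cardinal.sum fun b : β => #{a : α // f a = b} := by
    rw [← Cardinal.mk_sigma]
    exact Cardinal.mk_congr (Equiv.sigmaFiberEquiv f).symm
  have : #α < Cardinal.lift.{1} κ := by
    rw [hsum]
    exact Cardinal.sum_lt_lift_of_isRegular.{1,1} (aux_isRegular_lift hκ)
      (by simpa using hβ) hfib
  exact absurd hα this.ne

lemma aux_avoid {κ : Cardinal.{0}} (𝒜 : Set (Set Ordinal)) (hdisj : 𝒜.PairwiseDisjoint id)
    (hne : ∀ a ∈ 𝒜, a.Nonempty) (hcard : #𝒜 = Cardinal.lift.{1} κ)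
    (U : Set Ordinal) (hU : #U < Cardinal.lift.{1} κ) : ∃ a ∈ 𝒜, Disjoint a U := by
  by_contra h
  push_neg at h
  have hpt : ∀ a : ↥𝒜, ∃ x, x ∈ (a : Set Ordinal) ∧ x ∈ U := fun a =>
    Set.not_disjoint_iff.1 (h a a.2)
  choose g hg1 hg2 using hpt
  have hinj : Function.Injective (fun a : ↥𝒜 => (⟨g a, hg2 a⟩ : ↥U)) := by
    intro a a' hEq
    simp only [Subtype.mk.injEq] at hEq
    by_contra hne'
    have hne'' : (a : Set Ordinal) ≠ (a' : Set Ordinal) := fun hc =>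
      hne' (Subtype.ext hc)
    have := hdisj a.2 a'.2 hne''
    exact (Set.disjoint_left.1 this) (hg1 a) (hEq ▸ hg1 a')
  have := Cardinal.mk_le_of_injective hinj
  rw [hcard] at this
  exact absurd (this.trans_lt hU) (lt_irrefl _)

lemma aux_otp {χ : Cardinal.{0}} (a : Set Ordinal) (h : #a < Cardinal.lift.{1} χ) :
    ∃ σ < χ.ord, otpEq a σ := by
  have h1 : Ordinal.type ((· < ·) : a → a → Prop) < Ordinal.lift.{1} χ.ord := by
    rw [Cardinal.lift_ord, Cardinal.lt_ord, Ordinal.card_type]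
    exact h
  obtain ⟨σ, hσlt, hσ⟩ := Ordinal.lt_lift_iff.1 h1
  exact ⟨σ, hσlt, hσ.symm⟩

lemma aux_card_of_otp {a : Set Ordinal} {σ : Ordinal.{0}} (h : otpEq a σ) :
    #a = Cardinal.lift.{1} σ.card := by
  rw [← Ordinal.card_type ((· < ·) : a → a → Prop), h, ← Ordinal.lift_card]

lemma aux_card_of_unbounded {θ : Cardinal.{0}} (hθ : θ.IsRegular) (T : Set Ordinal)
    (hT : T ⊆ Set.Iio θ.ord) (hub : ∀ ε < θ.ord, ∃ τ ∈ T, ε < τ) :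
    #T = Cardinal.lift.{1} θ := by
  refine le_antisymm ?_ ?_
  · have := Cardinal.mk_le_mk_of_subset hT
    rwa [Ordinal.mk_Iio_ordinal, Cardinal.card_ord] at this
  · by_contra hlt
    push_neg at hlt
    have hsup : (⨆ x : ↥T, Ordinal.lift.{1} x.1) < Ordinal.lift.{1} θ.ord := by
      apply Ordinal.iSup_lt_ord_lift.{1,1}
      · rw [← Ordinal.lift_cof, hθ.cof_eq]
        simpa using hlt
      · exact fun x => Ordinal.lift_lt.2 (hT x.2)
    obtain ⟨ε, hεθ, hε⟩ := Ordinal.lt_lift_iff.1 hsup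
    obtain ⟨τ, hτT, hτε⟩ := hub ε hεθ
    have : Ordinal.lift.{1} τ ≤ ⨆ x : ↥T, Ordinal.lift.{1} x.1 :=
      Ordinal.le_iSup (fun x : ↥T => Ordinal.lift.{1} x.1) (⟨τ, hτT⟩ : ↥T)
    rw [← hε, Ordinal.lift_le] at this
    exact absurd hτε (not_lt.2 this)

lemma aux_constOn_mono {c : Ordinal → Ordinal → Ordinal} {a b a' b' : Set Ordinal} {τ : Ordinal}
    (ha : a' ⊆ a) (hb : b' ⊆ b) (hna : a'.Nonempty) (hnb : b'.Nonempty)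
    (h : constOn c a b τ) : constOn c a' b' τ := by
  have hsub : Set.image2 c a' b' ⊆ {τ} := h ▸ Set.image2_subset ha hb
  refine subset_antisymm hsub ?_
  rw [Set.singleton_subset_iff]
  obtain ⟨x, hx⟩ := hna
  obtain ⟨y, hy⟩ := hnb
  have hmem : c x y ∈ Set.image2 c a' b' := Set.mem_image2_of_mem hx hy
  exact Set.mem_singleton_iff.1 (hsub hmem) ▸ hmem

attribute [local instance] Classical.propDecidable

noncomputable def auxS (χo : Ordinal.{0}) (G : Ordinal.{0} → Set (Set Ordinal.{0})) :
    Ordinal.{0} → Set Ordinal.{0} :=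
  Ordinal.lt_wf.fix fun ν rec =>
    if h : ∃ a, a ∈ G (ν % χo) ∧ ∀ ν' (hlt : ν' < ν), Disjoint (rec ν' hlt) a
    then h.choose else ∅

theorem auxS_eq (χo : Ordinal.{0}) (G : Ordinal.{0} → Set (Set Ordinal.{0})) (ν : Ordinal) :
    auxS χo G ν =
      if h : ∃ a, a ∈ G (ν % χo) ∧ ∀ ν' < ν, Disjoint (auxS χo G ν') a
      then h.choose else ∅ :=
  WellFounded.fix_eq _ _ _

theorem auxS_spec (χo : Ordinal.{0}) (G : Ordinal.{0} → Set (Set Ordinal.{0})) (ν : Ordinal) :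
    auxS χo G ν = ∅ ∨
      (auxS χo G ν ∈ G (ν % χo) ∧ ∀ ν' < ν, Disjoint (auxS χo G ν') (auxS χo G ν)) := by
  rw [auxS_eq]
  split_ifs with h
  · exact Or.inr h.choose_spec
  · exact Or.inl rfl

theorem auxS_disjoint (χo : Ordinal.{0}) (G : Ordinal.{0} → Set (Set Ordinal.{0}))
    {ν ν' : Ordinal} (h : ν' < ν) : Disjoint (auxS χo G ν') (auxS χo G ν) := by
  rcases auxS_spec χo G ν with h1 | h1
  · rw [h1]; exact disjoint_empty _
  · exact h1.2 ν' h

theorem auxS_mem {κ : Cardinal.{0}} (hκ : κ.IsRegular) (χo : Ordinal.{0})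
    (G : Ordinal.{0} → Set (Set Ordinal.{0})) {m : Cardinal.{0}} (hm : m < κ)
    (hsize : ∀ r, ∀ a ∈ G r, #a ≤ Cardinal.lift.{1} m)
    {ν : Ordinal} (hν : ν.card < κ)
    (hGd : (G (ν % χo)).PairwiseDisjoint id) (hGne : ∀ a ∈ G (ν % χo), a.Nonempty)
    (hGcard : #(G (ν % χo)) = Cardinal.lift.{1} κ) :
    auxS χo G ν ∈ G (ν % χo) := by
  have hU : #(⋃ x : ↥(Set.Iio ν), auxS χo G x.1) < Cardinal.lift.{1} κ := by
    have h1 : #(⋃ x : ↥(Set.Iio ν), auxS χo G x.1) ≤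
        Cardinal.sum fun x : ↥(Set.Iio ν) => #(auxS χo G x.1) :=
      Cardinal.mk_iUnion_le_sum_mk
    have h2 : ∀ x : ↥(Set.Iio ν), #(auxS χo G x.1) ≤ Cardinal.lift.{1} m := by
      intro x
      rcases auxS_spec χo G x.1 with hs | hs
      · rw [hs]; simp
      · exact hsize _ _ hs.1
    have h3 : (Cardinal.sum fun x : ↥(Set.Iio ν) => #(auxS χo G x.1)) ≤
        #(↥(Set.Iio ν)) * Cardinal.lift.{1} m :=
      (Cardinal.sum_le_sum _ _ h2).trans_eq (Cardinal.sum_const' _ _)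
    refine (h1.trans h3).trans_lt ?_
    rw [Ordinal.mk_Iio_ordinal]
    exact Cardinal.mul_lt_of_lt (Cardinal.aleph0_le_lift.2 hκ.aleph0_le)
      (Cardinal.lift_lt.2 hν) (Cardinal.lift_lt.2 hm)
  obtain ⟨a, ha, hdisj⟩ := aux_avoid _ hGd hGne hGcard _ hU
  have hcond : ∃ a, a ∈ G (ν % χo) ∧ ∀ ν' < ν, Disjoint (auxS χo G ν') a := by
    refine ⟨a, ha, fun ν' hν' => ?_⟩
    refine Disjoint.mono_left ?_ hdisj.symm
    exact Set.subset_iUnion (fun x : ↥(Set.Iio ν) => auxS χo G x.1) ⟨ν', hν'⟩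
  rw [auxS_eq, dif_pos hcond]
  exact hcond.choose_spec.1

lemma aux_Tc_unbounded {κ θ χ : Cardinal.{0}} (hκ : κ.IsRegular) (hχκ : χ < κ)
    {c : Ordinal → Ordinal → Ordinal} (hc : IsU1 κ θ χ c)
    {𝒜 : Set (Set Ordinal)} (hA : AFam κ χ 𝒜) :
    ∀ ε < θ.ord, ∃ τ ∈ Tc θ c 𝒜, ε < τ := by
  obtain ⟨h1, h2, h3, ν, hνχ, hνb⟩ := hA
  intro ε hε
  have hot : ∀ a : ↥𝒜, ∃ p : ↥(Set.Iio χ.ord), otpEq a.1 p.1 := by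
    intro a
    obtain ⟨σ, hσ, ho⟩ := aux_otp a.1 ((hνb a.1 a.2).trans_lt (Cardinal.lift_lt.2 hνχ))
    exact ⟨⟨σ, hσ⟩, ho⟩
  choose f hf using hot
  have hβ : #(↥(Set.Iio χ.ord)) < Cardinal.lift.{1} κ := by
    rw [Ordinal.mk_Iio_ordinal, Cardinal.card_ord]; exact Cardinal.lift_lt.2 hχκ
  obtain ⟨p, hp⟩ := aux_pigeon hκ h3 hβ f
  set 𝒜σ : Set (Set Ordinal) := {x | x ∈ 𝒜 ∧ otpEq x p.1} with h𝒜σ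
  have hle1 : #(↥𝒜σ) ≤ Cardinal.lift.{1} κ :=
    h3 ▸ Cardinal.mk_le_mk_of_subset (fun x hx => hx.1)
  have hle2 : Cardinal.lift.{1} κ ≤ #(↥𝒜σ) := by
    rw [← hp]
    refine Cardinal.mk_le_of_injective (f := fun y : {a : ↥𝒜 // f a = p} =>
      (⟨y.1.1, y.1.2, by have h := hf y.1; rw [y.2] at h; exact h⟩ : ↥𝒜σ)) ?_
    intro y y' hEq
    simp only [Subtype.mk.injEq] at hEq
    exact Subtype.ext (Subtype.ext hEq)
  have hcards : #(↥𝒜σ) = Cardinal.lift.{1} κ := le_antisymm hle1 hle2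
  have hKF : KappaFam κ p.1 𝒜σ :=
    ⟨fun a ha => ⟨(h1 a ha.1).1, ha.2⟩, h2.subset (fun x hx => hx.1), hcards⟩
  obtain ⟨a, ha, b, hb, hsb, τ, hετ, hτθ, hconst⟩ := hc p.1 p.2 𝒜σ hKF ε hε
  exact ⟨τ, ⟨hτθ, a, ha.1, b, hb.1, hsb, hconst⟩, hετ⟩

lemma aux_inter {κ θ χ : Cardinal.{0}} (hκ : κ.IsRegular) (hχ : χ.IsRegular) (hχκ : χ < κ)
    (c : Ordinal → Ordinal → Ordinal) (I : Set (Set Ordinal)) (hIne : I.Nonempty)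
    (hIcard : #I < Cardinal.lift.{1} χ)
    (hmem : ∀ T ∈ I, ∃ 𝒜, AFam κ χ 𝒜 ∧ Tc θ c 𝒜 ⊆ T) :
    ∃ 𝒜, AFam κ χ 𝒜 ∧ Tc θ c 𝒜 ⊆ ⋂₀ I := by
  obtain ⟨T0, hT0⟩ := hIne
  have hfam0 : ∀ j : ↥I, ∃ 𝒜, AFam κ χ 𝒜 ∧ Tc θ c 𝒜 ⊆ j.1 := fun j => hmem j j.2
  choose fam hfamA hfamT using hfam0
  choose νf hνf1 hνf2 using fun j : ↥I => (hfamA j).2.2.2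
  have hsup : (⨆ j : ↥I, Cardinal.lift.{1} (νf j)) < Cardinal.lift.{1} χ :=
    Cardinal.iSup_lt_lift_of_isRegular.{1,1} (aux_isRegular_lift hχ) (by simpa using hIcard)
      fun j => Cardinal.lift_lt.2 (hνf1 j)
  obtain ⟨m, hmχ, hm_eq⟩ := Cardinal.lt_lift_iff.1 hsup
  have hsize0 : ∀ j, ∀ a ∈ fam j, #a ≤ Cardinal.lift.{1} m := by
    intro j a ha
    refine (hνf2 j a ha).trans ?_
    rw [hm_eq]
    exact le_ciSup (Cardinal.bddAbove_range _) j
  have hIle : #(↥I) ≤ #(↥(Set.Iio χ.ord)) := by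
    rw [Ordinal.mk_Iio_ordinal, Cardinal.card_ord]; exact hIcard.le
  obtain ⟨f⟩ := (Cardinal.le_def _ _).1 hIle
  set enc : ↥I → Ordinal := fun j => (f j).1 with henc
  have henc_lt : ∀ j, enc j < χ.ord := fun j => (f j).2
  have henc_inj : Function.Injective enc := fun j j' h => f.injective (Subtype.ext h)
  set G : Ordinal → Set (Set Ordinal) := Function.extend enc fam (fun _ => ∅) with hG
  have hGenc : ∀ j, G (enc j) = fam j := fun j => henc_inj.extend_apply fam _ j
  have hGsize : ∀ r, ∀ a ∈ G r, #a ≤ Cardinal.lift.{1} m := by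
    intro r a ha
    by_cases h : ∃ j, enc j = r
    · obtain ⟨j, hj⟩ := h
      rw [← hj, hGenc] at ha
      exact hsize0 j a ha
    · rw [hG] at ha
      rw [Function.extend_apply' _ _ _ h] at ha
      exact absurd ha (Set.notMem_empty a)
  set χo := χ.ord with hχo
  have hχo0 : χo ≠ 0 := hχ.ord_pos.ne'
  have hcardν : ∀ ζ < κ.ord, ∀ j : ↥I, (χo * ζ + enc j).card < κ := by
    intro ζ hζ j
    rw [Ordinal.card_add, Ordinal.card_mul]
    refine Cardinal.add_lt_of_lt hκ.aleph0_le
      (Cardinal.mul_lt_of_lt hκ.aleph0_le ?_ (Cardinal.lt_ord.1 hζ)) ?_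
    · rw [hχo, Cardinal.card_ord]; exact hχκ
    · exact (Cardinal.lt_ord.1 (henc_lt j)).trans hχκ
  have hmod : ∀ (ζ : Ordinal) (j : ↥I), (χo * ζ + enc j) % χo = enc j := by
    intro ζ j
    rw [Ordinal.mul_add_mod_self, Ordinal.mod_eq_of_lt (henc_lt j)]
  have hdiv : ∀ (ζ : Ordinal) (j : ↥I), (χo * ζ + enc j) / χo = ζ := by
    intro ζ j
    rw [Ordinal.mul_add_div _ hχo0, Ordinal.div_eq_zero_of_lt (henc_lt j), add_zero]
  have hmκ : m < κ := hmχ.trans hχκ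
  have hsmem : ∀ ζ < κ.ord, ∀ j : ↥I, auxS χo G (χo * ζ + enc j) ∈ fam j := by
    intro ζ hζ j
    have hGj1 : (G ((χo * ζ + enc j) % χo)) = fam j := by rw [hmod ζ j, hGenc]
    have h := auxS_mem hκ χo G hmκ hGsize (hcardν ζ hζ j)
      (by rw [hGj1]; exact (hfamA j).2.1)
      (by rw [hGj1]; exact fun a ha => ((hfamA j).1 a ha).2)
      (by rw [hGj1]; exact (hfamA j).2.2.1)
    rwa [hGj1] at h
  set u : Ordinal → Set Ordinal := fun ζ => ⋃ j : ↥I, auxS χo G (χo * ζ + enc j) with hu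
  set j0 : ↥I := ⟨T0, hT0⟩ with hj0
  have hidx_ne : ∀ {ζ ζ' : Ordinal} (j j' : ↥I), ζ ≠ ζ' →
      χo * ζ + enc j ≠ χo * ζ' + enc j' := by
    intro ζ ζ' j j' hne hEq
    apply hne
    rw [← hdiv ζ j, ← hdiv ζ' j', hEq]
  have hudisj : ∀ {ζ ζ' : Ordinal}, ζ ≠ ζ' → Disjoint (u ζ) (u ζ') := by
    intro ζ ζ' hne
    simp only [hu, Set.disjoint_iUnion_left, Set.disjoint_iUnion_right]
    intro j j'
    rcases lt_or_gt_of_ne (hidx_ne j' j hne) with h | h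
    · exact auxS_disjoint χo G h
    · exact (auxS_disjoint χo G h).symm
  have hune : ∀ ζ < κ.ord, (u ζ).Nonempty := by
    intro ζ hζ
    obtain ⟨x, hx⟩ := ((hfamA j0).1 _ (hsmem ζ hζ j0)).2
    exact ⟨x, Set.mem_iUnion.2 ⟨j0, hx⟩⟩
  have husub : ∀ ζ < κ.ord, u ζ ⊆ Set.Iio κ.ord := by
    intro ζ hζ
    refine Set.iUnion_subset fun j => ?_
    exact ((hfamA j).1 _ (hsmem ζ hζ j)).1
  have huinj : Set.InjOn u (Set.Iio κ.ord) := by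
    intro ζ hζ ζ' hζ' hEq
    by_contra hne
    obtain ⟨x, hx⟩ := hune ζ hζ
    exact Set.disjoint_left.1 (hudisj hne) hx (hEq ▸ hx)
  have husize : ∀ ζ : Ordinal, #(u ζ) ≤ #(↥I) * Cardinal.lift.{1} m := by
    intro ζ
    simp only [hu]
    refine (Cardinal.mk_iUnion_le_sum_mk).trans ?_
    refine (Cardinal.sum_le_sum _ _ fun j => ?_).trans_eq (Cardinal.sum_const' _ _)
    rcases auxS_spec χo G (χo * ζ + enc j) with hs | hs
    · rw [hs]; simp
    · exact hGsize _ _ hs.1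
  have hprod : #(↥I) * Cardinal.lift.{1} m < Cardinal.lift.{1} χ :=
    Cardinal.mul_lt_of_lt (Cardinal.aleph0_le_lift.2 hχ.aleph0_le) hIcard
      (Cardinal.lift_lt.2 hmχ)
  obtain ⟨m', hm'χ, hm'_eq⟩ := Cardinal.lt_lift_iff.1 hprod
  refine ⟨u '' Set.Iio κ.ord, ⟨?_, ?_, ?_, m', hm'χ, ?_⟩, ?_⟩
  · rintro a ⟨ζ, hζ, rfl⟩
    exact ⟨husub ζ hζ, hune ζ hζ⟩
  · rintro a ⟨ζ, hζ, rfl⟩ b ⟨ζ', hζ', rfl⟩ hab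
    exact hudisj fun h => hab (by rw [h])
  · show #(u '' Set.Iio κ.ord) = Cardinal.lift.{1} κ
    rw [Cardinal.mk_image_eq_of_injOn _ _ huinj, Ordinal.mk_Iio_ordinal, Cardinal.card_ord]
  · rintro a ⟨ζ, hζ, rfl⟩
    show #(u ζ) ≤ Cardinal.lift.{1} m'
    rw [hm'_eq]
    exact husize ζ
  · rintro τ ⟨hτθ, _, ⟨ζ, hζ, rfl⟩, _, ⟨ζ', hζ', rfl⟩, hsb, hconst⟩
    refine Set.mem_sInter.2 fun T hT => ?_
    refine hfamT ⟨T, hT⟩ ⟨hτθ, auxS χo G (χo * ζ + enc ⟨T, hT⟩), hsmem ζ hζ ⟨T, hT⟩,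
      auxS χo G (χo * ζ' + enc ⟨T, hT⟩), hsmem ζ' hζ' ⟨T, hT⟩, ?_, ?_⟩
    · intro x hx y hy
      exact hsb x (Set.mem_iUnion.2 ⟨⟨T, hT⟩, hx⟩) y (Set.mem_iUnion.2 ⟨⟨T, hT⟩, hy⟩)
    · refine aux_constOn_mono ?_ ?_ ?_ ?_ hconst
      · exact Set.subset_iUnion (fun j : ↥I => auxS χo G (χo * ζ + enc j)) ⟨T, hT⟩
      · exact Set.subset_iUnion (fun j : ↥I => auxS χo G (χo * ζ' + enc j)) ⟨T, hT⟩
      · exact ((hfamA ⟨T, hT⟩).1 _ (hsmem ζ hζ ⟨T, hT⟩)).2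
      · exact ((hfamA ⟨T, hT⟩).1 _ (hsmem ζ' hζ' ⟨T, hT⟩)).2

lemma aux_KF_AFam {κ χ : Cardinal.{0}} (hκ : κ.IsRegular) {σ : Ordinal} (hσ : σ < χ.ord)
    {𝒜 : Set (Set Ordinal)} (h : KappaFam κ σ 𝒜) : AFam κ χ 𝒜 := by
  obtain ⟨h1, h2, h3⟩ := h
  have hcard : #𝒜 = Cardinal.lift.{1} κ := h3
  have hσ0 : σ ≠ 0 := by
    rintro rfl
    have hsub : 𝒜 ⊆ {(∅ : Set Ordinal)} := by
      intro a ha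
      have hot := (h1 a ha).2
      rw [otpEq, Ordinal.lift_zero, Ordinal.type_eq_zero_iff_isEmpty] at hot
      rw [Set.mem_singleton_iff, ← Set.not_nonempty_iff_eq_empty]
      rintro ⟨x, hx⟩
      exact hot.false ⟨x, hx⟩
    have hle : #𝒜 ≤ 1 := (Cardinal.mk_le_mk_of_subset hsub).trans (by simp)
    rw [hcard] at hle
    exact absurd (hle.trans_lt (by simpa using Cardinal.one_lt_aleph0))
      (not_lt.2 (Cardinal.aleph0_le_lift.2 hκ.aleph0_le))
  refine ⟨fun a ha => ⟨(h1 a ha).1, ?_⟩, h2, h3, σ.card, Cardinal.lt_ord.1 hσ, ?_⟩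
  · by_contra hne
    rw [Set.not_nonempty_iff_eq_empty] at hne
    have hot := (h1 a ha).2
    rw [otpEq, hne] at hot
    have h0 : Ordinal.type ((· < ·) : (∅ : Set Ordinal) → (∅ : Set Ordinal) → Prop) = 0 :=
      Ordinal.type_eq_zero_iff_isEmpty.2 inferInstance
    rw [h0] at hot
    exact hσ0 (Ordinal.lift_inj.1 (by simpa using hot.symm))
  · intro a ha
    show #a ≤ Cardinal.lift.{1} σ.card
    rw [aux_card_of_otp (h1 a ha).2]

lemma aux_filter {κ θ χ : Cardinal.{0}} (hκ : κ.IsRegular) (hχ : χ.IsRegular) (hθ : θ.IsRegular)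
    (hχκ : χ < κ) {c : Ordinal → Ordinal → Ordinal} (hc : IsU1 κ θ χ c) :
    IsUniformFilter θ χ (Fc κ θ χ c) := by
  have hsing : AFam κ χ ((fun α => ({α} : Set Ordinal)) '' Set.Iio κ.ord) := by
    refine ⟨?_, ?_, ?_, 1, by exact_mod_cast hχ.nat_lt 1, ?_⟩
    · rintro a ⟨α, hα, rfl⟩
      exact ⟨Set.singleton_subset_iff.2 hα, Set.singleton_nonempty α⟩
    · rintro a ⟨α, hα, rfl⟩ b ⟨β, hβ, rfl⟩ hab
      exact Set.disjoint_singleton.2 fun h => hab (by rw [h])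
    · show #((fun α => ({α} : Set Ordinal)) '' Set.Iio κ.ord) = Cardinal.lift.{1} κ
      rw [Cardinal.mk_image_eq Set.singleton_injective, Ordinal.mk_Iio_ordinal,
        Cardinal.card_ord]
    · rintro a ⟨α, hα, rfl⟩
      show #({α} : Set Ordinal) ≤ Cardinal.lift.{1} 1
      simp
  refine ⟨⟨fun T hT => hT.1, ?_, ?_, ?_, ?_⟩, ?_⟩
  · exact ⟨subset_rfl, _, hsing, fun τ hτ => hτ.1⟩
  · rintro ⟨_, 𝒜, hA, hsub⟩
    obtain ⟨τ, hτ, _⟩ := aux_Tc_unbounded hκ hχκ hc hA 0 hθ.ord_pos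
    exact hsub hτ
  · rintro S ⟨_, 𝒜, hA, hsub⟩ T hST hTsub
    exact ⟨hTsub, 𝒜, hA, hsub.trans hST⟩
  · intro I hIF hIne hIlt
    obtain ⟨𝒜, hA, hsub⟩ :=
      aux_inter hκ hχ hχκ c I hIne hIlt (fun T hT => (hIF hT).2)
    refine ⟨?_, 𝒜, hA, hsub⟩
    obtain ⟨T0, hT0⟩ := hIne
    exact (Set.sInter_subset_of_mem hT0).trans (hIF hT0).1
  · rintro T ⟨hTsub, 𝒜, hA, hsub⟩
    show #T = Cardinal.lift.{1} θ
    refine aux_card_of_unbounded hθ T hTsub fun ε hε => ?_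
    obtain ⟨τ, hτ, hlt⟩ := aux_Tc_unbounded hκ hχκ hc hA ε hε
    exact ⟨τ, hsub hτ, hlt⟩

/-- If no `χ`-complete uniform filter on `θ` is weakly `λ`-saturated
(equivalently, every such filter admits a map `ψ : θ → λ` all of whose fibers
are positive), then `U₁(κ,2,θ,χ)` implies `Pr₁(κ,κ,λ,χ)`. -/
theorem stmt7 (κ θ χ lam : Cardinal) (hκ : κ.IsRegular) (hχ : χ.IsRegular)
    (hθ : θ.IsRegular) (hχκ : χ < κ) (hθκ : θ ≤ κ)
    (hnosat : ∀ F : Set (Set Ordinal), IsUniformFilter θ χ F →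
      ∃ ψ : Ordinal → Ordinal, (∀ τ < θ.ord, ψ τ < lam.ord) ∧
        ∀ ξ < lam.ord, FPos F {τ | τ < θ.ord ∧ ψ τ = ξ})
    (hU1 : U1 κ θ χ) :
    Pr1 κ lam χ := by
  obtain ⟨c, hcb, hc⟩ := hU1
  obtain ⟨ψ, hψb, hψpos⟩ := hnosat (Fc κ θ χ c) (aux_filter hκ hχ hθ hχκ hc)
  refine ⟨fun α β => ψ (c α β), fun α β h1 h2 => hψb _ (hcb α β h1 h2), ?_⟩
  intro σ hσ 𝒜 h𝒜 ξ hξ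
  have hTmem : Tc θ c 𝒜 ∈ Fc κ θ χ c :=
    ⟨fun τ hτ => hτ.1, 𝒜, aux_KF_AFam hκ hσ h𝒜, subset_rfl⟩
  obtain ⟨τ, hτ1, hτ2⟩ := hψpos ξ hξ (Tc θ c 𝒜) hTmem
  obtain ⟨hτθ, a, ha, b, hb, hsb, hconst⟩ := hτ2
  refine ⟨a, ha, b, hb, hsb, ?_⟩
  show Set.image2 (fun α β => ψ (c α β)) a b = {ξ}
  rw [← Set.image_image2, hconst, Set.image_singleton, hτ1.2]
end

section
/- U₁(κ,2,θ,χ) implies U(κ,2,θ,χ). -/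
open Cardinal Set

/-- `U₁(κ,2,θ,χ)` implies `U(κ,2,θ,χ)`. -/
theorem stmt9 (κ θ χ : Cardinal) (hκ : κ.IsRegular) (hχ : χ.IsRegular)
    (hχκ : χ < κ) (hθκ : θ ≤ κ)
    (h : U1 κ θ χ) :
    ∃ c : Ordinal → Ordinal → Ordinal,
      (∀ α β : Ordinal, α < β → β < κ.ord → c α β < θ.ord) ∧ IsU κ 2 θ χ c := by
  obtain ⟨c, hc, hU1⟩ := h
  refine ⟨c, hc, ?_⟩
  intro σ hσ 𝒜 h𝒜 τ hτ
  obtain ⟨a, ha, b, hb, hab, τ', hττ', hτ'θ, hconst⟩ := hU1 σ hσ 𝒜 h𝒜 τ hτ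
  have hne : ∀ x ∈ 𝒜, x.Nonempty := by
    by_contra hcon
    push_neg at hcon
    obtain ⟨x, hx, hxe⟩ := hcon
    have hxe' : x = ∅ := hxe
    have hσ0 : σ = 0 := by
      have := (h𝒜.1 x hx).2
      rw [otpEq, hxe'] at this
      have h0 : Ordinal.type ((· < ·) : (∅ : Set Ordinal) → (∅ : Set Ordinal) → Prop) = 0 :=
        Ordinal.type_eq_zero_iff_isEmpty.mpr (by simp)
      rw [h0] at this
      have h2 : Ordinal.lift.{1,0} σ = Ordinal.lift.{1,0} 0 := by simpa using this.symm
      exact Ordinal.lift_inj.mp h2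
    have hsub : 𝒜.Subsingleton := by
      intro y hy z hz
      have hy' := (h𝒜.1 y hy).2
      have hz' := (h𝒜.1 z hz).2
      rw [otpEq, hσ0] at hy' hz'
      simp only [Ordinal.lift_zero] at hy' hz'
      have hy0 : y = ∅ := Set.eq_empty_iff_forall_notMem.mpr
        (Set.eq_empty_iff_forall_notMem.mp (by simpa using Ordinal.type_eq_zero_iff_isEmpty.mp hy'))
      have hz0 : z = ∅ := Set.eq_empty_iff_forall_notMem.mpr
        (Set.eq_empty_iff_forall_notMem.mp (by simpa using Ordinal.type_eq_zero_iff_isEmpty.mp hz'))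
      rw [hy0, hz0]
    have hle : #𝒜 ≤ 1 := Cardinal.mk_le_one_iff_set_subsingleton.mpr hsub
    have hcard := h𝒜.2.2
    rw [cardEq] at hcard
    rw [hcard] at hle
    have : Cardinal.aleph0 ≤ Cardinal.lift.{1} κ := by
      rw [Cardinal.aleph0_le_lift]
      exact hκ.aleph0_le
    exact absurd (le_trans this hle) (by simp [Cardinal.one_lt_aleph0.not_ge])
  have hane : a.Nonempty := hne a ha
  have hbne : b.Nonempty := hne b hb
  have haneb : a ≠ b := by
    intro hEq
    obtain ⟨x, hx⟩ := hane
    exact absurd (hab x hx x (hEq ▸ hx)) (lt_irrefl x)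
  refine ⟨{a, b}, ?_, ?_, ?_⟩
  · intro x hx
    rcases hx with rfl | hx
    · exact ha
    · exact Set.mem_singleton_iff.mp hx ▸ hb
  · rw [cardEq]
    have : #({a, b} : Set (Set Ordinal)) = 2 := by
      rw [Cardinal.mk_insert (by simpa using haneb), Cardinal.mk_singleton]
      norm_num
    rw [this]
    simp
  · rintro a' (rfl | ha') b' (rfl | hb') hbel z hz
    · obtain ⟨x, hx⟩ := hane
      exact absurd (hbel x hx x hx) (lt_irrefl x)
    · rw [Set.mem_singleton_iff.mp hb'] at hz
      rw [constOn] at hconst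
      rw [hconst] at hz
      rw [Set.mem_singleton_iff.mp hz]
      exact hττ'.le
    · rw [Set.mem_singleton_iff.mp ha'] at hbel
      obtain ⟨x, hx⟩ := hane
      obtain ⟨y, hy⟩ := hbne
      exact absurd (lt_trans (hab x hx y hy) (hbel y hy x hx)) (lt_irrefl x)
    · rw [Set.mem_singleton_iff.mp ha', Set.mem_singleton_iff.mp hb'] at hbel
      obtain ⟨y, hy⟩ := hbne
      exact absurd (hbel y hy y hy) (lt_irrefl y)
end

section
/- Suppose λ is a successor cardinal, say λ = ν⁺. Then no λ-complete uniform filter on λ is weakly λ-saturated; that is, for every λ-complete uniform filter F on λ there is a function ψ : λ → λ all of whose fibers are F-positive. -/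
/-! Ulam's argument. For `β < λ = ν⁺` fix injections `f β : β → ν` and put
`A η ξ = {β < λ | ξ < β ∧ f β ξ = η}`. For fixed `ξ` the `ν` sets `A η ξ` cover `λ` except for
`ξ + 1`, so by `λ`-completeness and uniformity some `A (η ξ) ξ` is positive. Some value `η₀` is taken
by `η` on `λ` many `ξ`, and for these `ξ` the sets `A η₀ ξ` are pairwise disjoint (each `f β` is
injective); reindexing them by `λ` yields `ψ`. -/
open Cardinal Set

theorem mk_Iio_ord (κ : Cardinal.{0}) : #(Iio κ.ord) = lift.{1} κ := by
  rw [mk_Iio_ordinal, card_ord]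

theorem FPos.mono {F : Set (Set Ordinal)} {X Y : Set Ordinal} (hX : FPos F X) (hXY : X ⊆ Y) :
    FPos F Y :=
  fun T hT => (hX T hT).mono (inter_subset_inter_left T hXY)

theorem IsUniformFilter.exists_fPos_of_mk_diff_lt {θ : Cardinal.{0}} {F : Set (Set Ordinal)}
    (hF : IsUniformFilter θ θ F) {s : Set Ordinal} (hs : s.Nonempty) (hsθ : #s < lift.{1} θ)
    (X : Ordinal → Set Ordinal) (hX : #(Iio θ.ord \ ⋃ i ∈ s, X i : Set Ordinal) < lift.{1} θ) :
    ∃ i ∈ s, FPos F (X i) := by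
  by_contra! hnull
  have hT : ∀ i ∈ s, ∃ T ∈ F, X i ∩ T = ∅ := by
    intro i hi
    simpa [FPos, not_nonempty_iff_eq_empty] using hnull i hi
  choose! T hTF hTX using hT
  have hmem : ⋂₀ (T '' s) ∈ F :=
    hF.1.2.2.2.2 _ (image_subset_iff.mpr hTF) (hs.image T) (mk_image_le.trans_lt hsθ)
  have hsub : ⋂₀ (T '' s) ⊆ Iio θ.ord \ ⋃ i ∈ s, X i := by
    refine fun β hβ => ⟨hF.1.1 _ hmem hβ, ?_⟩
    simp only [mem_iUnion, not_exists]
    intro i hi hβX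
    have : β ∈ X i ∩ T i := ⟨hβX, hβ _ (mem_image_of_mem T hi)⟩
    rwa [hTX i hi] at this
  exact ((mk_le_mk_of_subset hsub).trans_lt hX).ne (hF.2 _ hmem)

theorem exists_injOn_Iio_of_card_le {ν : Cardinal.{0}} {β : Ordinal.{0}} (hβ : β.card ≤ ν) :
    ∃ g : Ordinal → Ordinal, MapsTo g (Iio β) (Iio ν.ord) ∧ InjOn g (Iio β) := by
  obtain ⟨e⟩ : Nonempty (Iio β ↪ Iio ν.ord) := by
    rw [← Cardinal.le_def, mk_Iio_ordinal, mk_Iio_ord, lift_le]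
    exact hβ
  refine ⟨fun ξ => if h : ξ < β then e ⟨ξ, h⟩ else 0, fun ξ hξ => ?_, fun ξ hξ ξ' hξ' h => ?_⟩
  · simp only [dif_pos (mem_Iio.mp hξ)]
    exact (e ⟨ξ, hξ⟩).2
  · simp only [dif_pos (mem_Iio.mp hξ), dif_pos (mem_Iio.mp hξ')] at h
    exact congrArg Subtype.val (e.injective (Subtype.ext h))

/-- Ulam's matrix on `L`, where `f β` is meant to be an injection of `β` into a smaller cardinal. -/
def ulamEntry (L : Ordinal) (f : Ordinal → Ordinal → Ordinal) (η ξ : Ordinal) : Set Ordinal :=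
  {β | β < L ∧ ξ < β ∧ f β ξ = η}

theorem pairwiseDisjoint_ulamEntry {L : Ordinal} {f : Ordinal → Ordinal → Ordinal}
    (hf : ∀ β < L, InjOn (f β) (Iio β)) (η : Ordinal) :
    (univ : Set Ordinal).PairwiseDisjoint (ulamEntry L f η) := by
  refine fun ξ _ ξ' _ hne => Set.disjoint_left.mpr ?_
  rintro β ⟨hβL, hξβ, hfξ⟩ ⟨-, hξ'β, hfξ'⟩
  exact hne (hf β hβL hξβ hξ'β (hfξ.trans hfξ'.symm))

theorem diff_iUnion_ulamEntry_subset {L N : Ordinal} {f : Ordinal → Ordinal → Ordinal}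
    (hf : ∀ β < L, MapsTo (f β) (Iio β) (Iio N)) (ξ : Ordinal) :
    Iio L \ ⋃ η ∈ Iio N, ulamEntry L f η ξ ⊆ Iio (Order.succ ξ) := by
  rintro β ⟨hβL, hβ⟩
  by_contra hξβ
  have hξβ : ξ < β := Order.succ_le_iff.mp (not_lt.mp hξβ)
  exact hβ (mem_biUnion (hf β hβL hξβ) ⟨hβL, hξβ, rfl⟩)

theorem IsUniformFilter.exists_fPos_ulamEntry {θ μ : Cardinal.{0}} (hθ : ℵ₀ ≤ θ) (hμ : 0 < μ)
    (hμθ : μ < θ) {F : Set (Set Ordinal)} (hF : IsUniformFilter θ θ F)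
    {f : Ordinal → Ordinal → Ordinal} (hf : ∀ β < θ.ord, MapsTo (f β) (Iio β) (Iio μ.ord))
    {ξ : Ordinal} (hξ : ξ < θ.ord) : ∃ η < μ.ord, FPos F (ulamEntry θ.ord f η ξ) := by
  refine hF.exists_fPos_of_mk_diff_lt (s := Iio μ.ord) ⟨0, ord_pos.mpr hμ⟩
    (by rwa [mk_Iio_ord, lift_lt]) _ ?_
  calc #(Iio θ.ord \ ⋃ η ∈ Iio μ.ord, ulamEntry θ.ord f η ξ : Set Ordinal)
      ≤ #(Iio (Order.succ ξ)) := mk_le_mk_of_subset (diff_iUnion_ulamEntry_subset hf ξ)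
    _ < lift.{1} θ := by
      rw [mk_Iio_ordinal, lift_lt, ← lt_ord]
      exact (isSuccLimit_ord hθ).succ_lt hξ

theorem exists_mk_fiber_eq_succ {ν : Cardinal.{0}} (hν : ℵ₀ ≤ ν) {g : Ordinal → Ordinal}
    (hg : MapsTo g (Iio (Order.succ ν).ord) (Iio ν.ord)) :
    ∃ η, #{ξ | ξ < (Order.succ ν).ord ∧ g ξ = η} = lift.{1} (Order.succ ν) := by
  obtain ⟨η, hη⟩ := infinite_pigeonhole_card_lt (hg.restrict g _ _)
    (by rw [mk_Iio_ord, mk_Iio_ord, lift_lt]; exact Order.lt_succ ν)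
    (by rw [mk_Iio_ord, aleph0_le_lift]; exact hν.trans (Order.le_succ ν))
  have hfiber : Subtype.val '' (hg.restrict g _ _ ⁻¹' {η}) =
      {ξ | ξ < (Order.succ ν).ord ∧ g ξ = η} := by
    ext ξ
    simp [MapsTo.restrict, Subtype.map, Subtype.ext_iff, and_comm]
  refine ⟨η, le_antisymm ?_ ?_⟩
  · exact (mk_le_mk_of_subset fun ξ (hξ : ξ < _ ∧ _) => mem_Iio.mpr hξ.1).trans_eq (mk_Iio_ord _)
  · rw [← hfiber, mk_image_eq Subtype.val_injective, lift_succ]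
    exact Order.succ_le_of_lt (by simpa using hη)

theorem exists_fPos_fibers_of_pairwiseDisjoint {F : Set (Set Ordinal)} {L : Ordinal}
    (hL : 0 < L) {S : Set Ordinal} (hS : #S = #(Iio L)) {D : Ordinal → Set Ordinal}
    (hD : S.PairwiseDisjoint D) (hDL : ∀ ξ ∈ S, D ξ ⊆ Iio L) (hpos : ∀ ξ ∈ S, FPos F (D ξ)) :
    ∃ ψ : Ordinal → Ordinal, (∀ τ < L, ψ τ < L) ∧ ∀ ξ < L, FPos F {τ | τ < L ∧ ψ τ = ξ} := by
  classical
  obtain ⟨e⟩ : Nonempty (Iio L ≃ S) := Cardinal.eq.mp hS.symm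
  let ψ τ : Ordinal := if h : ∃ ζ : Iio L, τ ∈ D (e ζ) then h.choose else 0
  refine ⟨ψ, fun τ _ => ?_, fun ξ hξ => (hpos _ (e ⟨ξ, hξ⟩).2).mono fun τ hτ => ?_⟩
  · dsimp only [ψ]
    split_ifs with h
    exacts [h.choose.2, hL]
  · have h : ∃ ζ : Iio L, τ ∈ D (e ζ) := ⟨_, hτ⟩
    have hchoose : h.choose = ⟨ξ, hξ⟩ := e.injective <| Subtype.ext <|
      hD.elim (e _).2 (e _).2 (not_disjoint_iff.mpr ⟨τ, h.choose_spec, hτ⟩)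
    exact ⟨hDL _ (e _).2 hτ, by simp only [ψ, dif_pos h, hchoose]⟩

/-- If `λ = ν⁺` is a successor cardinal, then no `λ`-complete uniform filter on
`λ` is weakly `λ`-saturated: every such filter admits `ψ : λ → λ` all of whose
fibers are positive. -/
theorem stmt11 (ν lam : Cardinal) (hν : Cardinal.aleph 0 ≤ ν)
    (hlam : lam = Order.succ ν) :
    ∀ F : Set (Set Ordinal), IsUniformFilter lam lam F →
      ∃ ψ : Ordinal → Ordinal, (∀ τ < lam.ord, ψ τ < lam.ord) ∧
        ∀ ξ < lam.ord, FPos F {τ | τ < lam.ord ∧ ψ τ = ξ} := by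
  intro F hF
  subst hlam
  rw [aleph_zero] at hν
  have hlam_inf : ℵ₀ ≤ Order.succ ν := hν.trans (Order.le_succ ν)
  choose! f hf_maps hf_inj using fun β (hβ : β < (Order.succ ν).ord) =>
    exists_injOn_Iio_of_card_le (Order.lt_succ_iff.mp (lt_ord.mp hβ))
  choose! η hη_lt hη_pos using fun ξ (hξ : ξ < (Order.succ ν).ord) =>
    hF.exists_fPos_ulamEntry hlam_inf (aleph0_pos.trans_le hν) (Order.lt_succ ν) hf_maps hξ
  obtain ⟨η₀, hη₀⟩ := exists_mk_fiber_eq_succ hν hη_lt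
  exact exists_fPos_fibers_of_pairwiseDisjoint (S := {ξ | ξ < (Order.succ ν).ord ∧ η ξ = η₀})
    (isSuccLimit_ord hlam_inf).pos (hη₀.trans (mk_Iio_ord _).symm)
    ((pairwiseDisjoint_ulamEntry hf_inj η₀).subset (subset_univ _)) (fun _ _ _ hβ => hβ.1)
    fun ξ hξ => hξ.2 ▸ hη_pos ξ hξ.1
end

section
/- Let λ be a regular uncountable cardinal, and let ⟨𝒞_α : α < λ⁺⟩ be a □(λ⁺,<λ)-sequence with each 𝒞_α enumerated injectively as ⟨C_{α,i} : i < |𝒞_α|⟩. Suppose A' ⊆ λ⁺ is cofinal and i < λ is such that for all α < β in A', C_{α,i} = C_{β,i} ∩ α. Then C := ⋃{C_{α,i} : α ∈ A'} is a club in λ⁺ with C ∩ α ∈ 𝒞_α for every α ∈ acc(C), contradicting clause (3) of the definition; hence no such A' and i exist. -/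
open Cardinal Set

/-- `D` is a club in (the ordinal) `κ`: an unbounded subset of `κ` closed below `κ`. -/
def IsClubIn (κo : Ordinal) (D : Set Ordinal) : Prop :=
  (∀ x ∈ D, x < κo) ∧ (∀ x < κo, ∃ y ∈ D, x < y) ∧
    ∀ δ < κo, 0 < δ → sSup (D ∩ Set.Iio δ) = δ → δ ∈ D

/-- `S` is stationary in `κ`: it meets every club in `κ`. -/
def IsStat (κo : Ordinal) (S : Set Ordinal) : Prop :=
  ∀ D : Set Ordinal, IsClubIn κo D → (S ∩ D).Nonempty

/-- `acc⁺(A) := {α : sup(A ∩ α) = α > 0}`. -/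
def accPlus (A : Set Ordinal) : Set Ordinal := {α | 0 < α ∧ sSup (A ∩ Set.Iio α) = α}

/-!
By coherence, the union `U` of the sets `C_{α,i}` (`α ∈ A'`) agrees with `C_{α,i}` below each
`α ∈ A'`. So closedness of `U` and membership of `U ∩ δ` in `𝒞_δ` reduce to the same
properties of a single `C_{α,i}`, while unboundedness comes from cofinality of `A'`.
-/
section Coherent

variable {ι : Type*} [LinearOrder ι] {A : Set ι} {D : ι → Set ι}

theorem biUnion_inter_Iio_eq_of_coherent
    (hcoh : ∀ α ∈ A, ∀ β ∈ A, α < β → D α = D β ∩ Iio α)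
    {α δ : ι} (hα : α ∈ A) (hδ : δ ≤ α) :
    (⋃ β ∈ A, D β) ∩ Iio δ = D α ∩ Iio δ := by
  ext x
  simp only [mem_inter_iff, mem_iUnion, mem_Iio, exists_prop]
  refine ⟨fun ⟨⟨β, hβ, hx⟩, hxδ⟩ => ⟨?_, hxδ⟩, fun ⟨hx, hxδ⟩ => ⟨⟨α, hα, hx⟩, hxδ⟩⟩
  rcases lt_trichotomy β α with hβα | rfl | hαβ
  · rw [hcoh β hβ α hα hβα] at hx
    exact hx.1
  · exact hx
  · rw [hcoh α hα β hβ hαβ]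
    exact ⟨hx, hxδ.trans_le hδ⟩

end Coherent

section Club

variable {κ : Ordinal} {A : Set Ordinal} {D : Ordinal → Set Ordinal}

theorem isClubIn_biUnion_of_coherent (hA : A ⊆ Iio κ)
    (hcof : ∀ x < κ, ∃ α ∈ A, x < α)
    (hD : ∀ α ∈ A, (∀ x ∈ D α, x < α) ∧ sSup (D α) = sSup (Iio α) ∧
      ∀ δ < α, 0 < δ → sSup (D α ∩ Iio δ) = δ → δ ∈ D α)
    (hcoh : ∀ α ∈ A, ∀ β ∈ A, α < β → D α = D β ∩ Iio α) :
    IsClubIn κ (⋃ α ∈ A, D α) := by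
  refine ⟨?bounded, ?unbounded, ?closed⟩
  case bounded =>
    intro x hx
    obtain ⟨α, hα, hxα⟩ := mem_iUnion₂.1 hx
    exact ((hD α hα).1 x hxα).trans (hA hα)
  case unbounded =>
    intro x hx
    obtain ⟨α, hα, hxα⟩ := hcof x hx
    obtain ⟨β, hβ, hαβ⟩ := hcof α (hA hα)
    have hx_lt : x < sSup (D β) := by
      rw [(hD β hβ).2.1]
      exact hxα.trans_le (le_csSup bddAbove_Iio hαβ)
    obtain ⟨y, hy, hxy⟩ := exists_lt_of_lt_csSup' hx_lt
    exact ⟨y, mem_biUnion hβ hy, hxy⟩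
  case closed =>
    intro δ hδ hδ0 hsup
    obtain ⟨α, hα, hδα⟩ := hcof δ hδ
    rw [biUnion_inter_Iio_eq_of_coherent hcoh hα hδα.le] at hsup
    exact mem_biUnion hα ((hD α hα).2.2 δ hδα hδ0 hsup)

theorem biUnion_inter_Iio_mem_of_coherent {𝒞 : Ordinal → Set (Set Ordinal)}
    (h𝒞 : ∀ α ∈ A, ∀ E ∈ 𝒞 α, ∀ δ ∈ accSet E, E ∩ Iio δ ∈ 𝒞 δ)
    (hD𝒞 : ∀ α ∈ A, D α ∈ 𝒞 α) (hDlt : ∀ α ∈ A, ∀ x ∈ D α, x < α)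
    (hcoh : ∀ α ∈ A, ∀ β ∈ A, α < β → D α = D β ∩ Iio α)
    {δ : Ordinal} (hδ : δ ∈ accSet (⋃ α ∈ A, D α)) :
    (⋃ α ∈ A, D α) ∩ Iio δ ∈ 𝒞 δ := by
  obtain ⟨hδU, hδ0, hsup⟩ := hδ
  obtain ⟨β, hβ, hδβ⟩ := mem_iUnion₂.1 hδU
  rw [biUnion_inter_Iio_eq_of_coherent hcoh hβ (hDlt β hβ δ hδβ).le] at hsup ⊢
  exact h𝒞 β hβ _ (hD𝒞 β hβ) δ ⟨hδβ, hδ0, hsup⟩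

end Club

theorem stmt13_general (lam : Cardinal.{0})
    (𝒞 : Ordinal → Set (Set Ordinal)) (C : Ordinal → Ordinal → Set Ordinal)
    (h1 : ∀ α < (Order.succ lam).ord, (𝒞 α).Nonempty ∧ cardLT (𝒞 α) lam ∧
      ∀ D ∈ 𝒞 α, (∀ x ∈ D, x < α) ∧ sSup D = sSup (Set.Iio α) ∧
        ∀ δ < α, 0 < δ → sSup (D ∩ Set.Iio δ) = δ → δ ∈ D)
    (h2 : ∀ α < (Order.succ lam).ord, ∀ D ∈ 𝒞 α, ∀ δ ∈ accSet D,
      D ∩ Set.Iio δ ∈ 𝒞 δ)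
    (h3 : ¬ ∃ Cl : Set Ordinal, IsClubIn (Order.succ lam).ord Cl ∧
      ∀ α ∈ accSet Cl, Cl ∩ Set.Iio α ∈ 𝒞 α)
    (henum : ∀ α < (Order.succ lam).ord, ∀ i < lam.ord, C α i ∈ 𝒞 α) :
    ¬ ∃ A' : Set Ordinal, ∃ i < lam.ord, A' ⊆ Set.Iio (Order.succ lam).ord ∧
      (∀ x < (Order.succ lam).ord, ∃ α ∈ A', x < α) ∧
      ∀ α ∈ A', ∀ β ∈ A', α < β → C α i = C β i ∩ Set.Iio α := by
  rintro ⟨A', i, hi, hA', hcof, hcoh⟩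
  have hmem : ∀ α ∈ A', C α i ∈ 𝒞 α := fun α hα => henum α (hA' hα) i hi
  have hCi := fun α hα => (h1 α (hA' hα)).2.2 _ (hmem α hα)
  exact h3 ⟨⋃ α ∈ A', C α i, isClubIn_biUnion_of_coherent hA' hcof hCi hcoh,
    fun δ hδ => biUnion_inter_Iio_mem_of_coherent (fun α hα => h2 α (hA' hα)) hmem
      (fun α hα => (hCi α hα).1) hcoh hδ⟩

/-- Given a `□(λ⁺,<λ)`-sequence `⟨𝒞_α : α < λ⁺⟩` enumerated as `⟨C_{α,i}⟩`,
there are no cofinal `A' ⊆ λ⁺` and `i < λ` such that `C_{α,i} = C_{β,i} ∩ α` for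
all `α < β` from `A'` (else `⋃{C_{α,i} : α ∈ A'}` would be a club threading the
sequence, contradicting clause (3)). -/
theorem stmt13 (lam : Cardinal.{0}) (hlam : lam.IsRegular)
    (huncb : Cardinal.aleph 0 < lam)
    (𝒞 : Ordinal → Set (Set Ordinal)) (C : Ordinal → Ordinal → Set Ordinal)
    (h1 : ∀ α < (Order.succ lam).ord, (𝒞 α).Nonempty ∧ cardLT (𝒞 α) lam ∧
      ∀ D ∈ 𝒞 α, (∀ x ∈ D, x < α) ∧ sSup D = sSup (Set.Iio α) ∧
        ∀ δ < α, 0 < δ → sSup (D ∩ Set.Iio δ) = δ → δ ∈ D)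
    (h2 : ∀ α < (Order.succ lam).ord, ∀ D ∈ 𝒞 α, ∀ δ ∈ accSet D,
      D ∩ Set.Iio δ ∈ 𝒞 δ)
    (h3 : ¬ ∃ Cl : Set Ordinal, IsClubIn (Order.succ lam).ord Cl ∧
      ∀ α ∈ accSet Cl, Cl ∩ Set.Iio α ∈ 𝒞 α)
    (henum : ∀ α < (Order.succ lam).ord, ∀ i < lam.ord, C α i ∈ 𝒞 α) :
    ¬ ∃ A' : Set Ordinal, ∃ i < lam.ord, A' ⊆ Set.Iio (Order.succ lam).ord ∧
      (∀ x < (Order.succ lam).ord, ∃ α ∈ A', x < α) ∧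
      ∀ α ∈ A', ∀ β ∈ A', α < β → C α i = C β i ∩ Set.Iio α :=
  stmt13_general lam 𝒞 C h1 h2 h3 henum
end
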